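/- arXiv:2204.13741 — 7 statements merged into one kernel-verified Lean document; each statement's English description precedes it below -/
import Mathlib

section
/- For all integers i, j ≥ 1, (1/i) E[log ‖Y_i‖_−] ≤ γ ≤ (1/j) E[log ‖Y_j‖_1], where ‖X‖_− := min_ℓ Σ_k [X]_{kℓ} is the minimum column sum and ‖X‖_1 := max_ℓ Σ_k [X]_{kℓ} is the maximum column sum. -/
open MeasureTheory ProbabilityTheory Filter Matrix

/-- The random matrix product `Y_i = (Aᵀ R_1)(Aᵀ R_2)⋯(Aᵀ R_i)`. -/
noncomputable def Ymat {K : ℕ} (A : Matrix (Fin K) (Fin K) ℝ) (r : ℕ → Fin K → ℝ) (i : ℕ) :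
    Matrix (Fin K) (Fin K) ℝ :=
  ((List.range i).map fun j => Aᵀ * Matrix.diagonal (r (j + 1))).prod

/-- minimum column sum `‖X‖₋ = min_ℓ Σ_k [X]_{kℓ}` -/
noncomputable def colMin {K : ℕ} (X : Matrix (Fin K) (Fin K) ℝ) : ℝ := ⨅ ℓ, ∑ k, X k ℓ

/-- maximum column sum `‖X‖₁ = max_ℓ Σ_k [X]_{kℓ}` -/
noncomputable def colMax {K : ℕ} (X : Matrix (Fin K) (Fin K) ℝ) : ℝ := ⨆ ℓ, ∑ k, X k ℓ

namespace BSAux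

variable {K : ℕ}

lemma colMin_le {X : Matrix (Fin K) (Fin K) ℝ} (ℓ : Fin K) : colMin X ≤ ∑ k, X k ℓ :=
  ciInf_le (f := fun ℓ => ∑ k, X k ℓ) (Set.Finite.bddBelow (Set.finite_range _)) ℓ

lemma le_colMax {X : Matrix (Fin K) (Fin K) ℝ} (ℓ : Fin K) : ∑ k, X k ℓ ≤ colMax X :=
  le_ciSup (f := fun ℓ => ∑ k, X k ℓ) (Set.Finite.bddAbove (Set.finite_range _)) ℓ

lemma le_colMin [Nonempty (Fin K)] {X : Matrix (Fin K) (Fin K) ℝ} {c : ℝ}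
    (h : ∀ ℓ, c ≤ ∑ k, X k ℓ) : c ≤ colMin X := le_ciInf h

lemma colMax_le [Nonempty (Fin K)] {X : Matrix (Fin K) (Fin K) ℝ} {c : ℝ}
    (h : ∀ ℓ, ∑ k, X k ℓ ≤ c) : colMax X ≤ c := ciSup_le h

lemma exists_colMin [Nonempty (Fin K)] (X : Matrix (Fin K) (Fin K) ℝ) :
    ∃ ℓ, colMin X = ∑ k, X k ℓ := by
  obtain ⟨ℓ₀, h⟩ := Finite.exists_min (fun ℓ => ∑ k, X k ℓ)
  exact ⟨ℓ₀, le_antisymm (colMin_le ℓ₀) (le_colMin h)⟩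

lemma exists_colMax [Nonempty (Fin K)] (X : Matrix (Fin K) (Fin K) ℝ) :
    ∃ ℓ, colMax X = ∑ k, X k ℓ := by
  obtain ⟨ℓ₀, h⟩ := Finite.exists_max (fun ℓ => ∑ k, X k ℓ)
  exact ⟨ℓ₀, le_antisymm (colMax_le h) (le_colMax ℓ₀)⟩

lemma colMin_nonneg [Nonempty (Fin K)] {X : Matrix (Fin K) (Fin K) ℝ}
    (hX : ∀ k ℓ, 0 ≤ X k ℓ) : 0 ≤ colMin X :=
  le_colMin fun ℓ => Finset.sum_nonneg fun k _ => hX k ℓ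

lemma colMin_le_colMax [Nonempty (Fin K)] (X : Matrix (Fin K) (Fin K) ℝ) :
    colMin X ≤ colMax X :=
  (colMin_le (Classical.arbitrary _)).trans (le_colMax _)

lemma colMax_nonneg [Nonempty (Fin K)] {X : Matrix (Fin K) (Fin K) ℝ}
    (hX : ∀ k ℓ, 0 ≤ X k ℓ) : 0 ≤ colMax X :=
  (Finset.sum_nonneg fun k _ => hX k (Classical.arbitrary _)).trans (le_colMax _)

lemma colSum_mul (X Z : Matrix (Fin K) (Fin K) ℝ) (ℓ : Fin K) :
    ∑ k, (X * Z) k ℓ = ∑ t, (∑ k, X k t) * Z t ℓ := by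
  simp only [Matrix.mul_apply, Finset.sum_mul]
  rw [Finset.sum_comm]

lemma mul_nonneg' {X Z : Matrix (Fin K) (Fin K) ℝ} (hX : ∀ k ℓ, 0 ≤ X k ℓ)
    (hZ : ∀ k ℓ, 0 ≤ Z k ℓ) : ∀ k ℓ, 0 ≤ (X * Z) k ℓ := fun k ℓ => by
  rw [Matrix.mul_apply]
  exact Finset.sum_nonneg fun t _ => mul_nonneg (hX k t) (hZ t ℓ)

lemma colMin_mul_le_colMin_mul [Nonempty (Fin K)] {X Z : Matrix (Fin K) (Fin K) ℝ}
    (hX : ∀ k ℓ, 0 ≤ X k ℓ) (hZ : ∀ k ℓ, 0 ≤ Z k ℓ) :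
    colMin X * colMin Z ≤ colMin (X * Z) := by
  refine le_colMin fun ℓ => ?_
  rw [colSum_mul]
  calc colMin X * colMin Z ≤ colMin X * ∑ t, Z t ℓ :=
        mul_le_mul_of_nonneg_left (colMin_le ℓ) (colMin_nonneg hX)
    _ = ∑ t, colMin X * Z t ℓ := by rw [Finset.mul_sum]
    _ ≤ ∑ t, (∑ k, X k t) * Z t ℓ :=
        Finset.sum_le_sum fun t _ => mul_le_mul_of_nonneg_right (colMin_le t) (hZ t ℓ)

lemma colMax_mul_le [Nonempty (Fin K)] {X Z : Matrix (Fin K) (Fin K) ℝ}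
    (hX : ∀ k ℓ, 0 ≤ X k ℓ) (hZ : ∀ k ℓ, 0 ≤ Z k ℓ) :
    colMax (X * Z) ≤ colMax X * colMax Z := by
  refine colMax_le fun ℓ => ?_
  rw [colSum_mul]
  calc ∑ t, (∑ k, X k t) * Z t ℓ ≤ ∑ t, colMax X * Z t ℓ :=
        Finset.sum_le_sum fun t _ => mul_le_mul_of_nonneg_right (le_colMax t) (hZ t ℓ)
    _ = colMax X * ∑ t, Z t ℓ := by rw [Finset.mul_sum]
    _ ≤ colMax X * colMax Z :=
        mul_le_mul_of_nonneg_left (le_colMax ℓ) (colMax_nonneg hX)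

lemma colMin_mul_le_colMax_mul_colMin [Nonempty (Fin K)] {X Z : Matrix (Fin K) (Fin K) ℝ}
    (hX : ∀ k ℓ, 0 ≤ X k ℓ) (hZ : ∀ k ℓ, 0 ≤ Z k ℓ) :
    colMin (X * Z) ≤ colMax X * colMin Z := by
  obtain ⟨ℓ₀, hℓ₀⟩ := exists_colMin Z
  calc colMin (X * Z) ≤ ∑ k, (X * Z) k ℓ₀ := colMin_le ℓ₀
    _ = ∑ t, (∑ k, X k t) * Z t ℓ₀ := colSum_mul X Z ℓ₀
    _ ≤ ∑ t, colMax X * Z t ℓ₀ :=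
        Finset.sum_le_sum fun t _ => mul_le_mul_of_nonneg_right (le_colMax t) (hZ t ℓ₀)
    _ = colMax X * ∑ t, Z t ℓ₀ := by rw [Finset.mul_sum]
    _ = colMax X * colMin Z := by rw [hℓ₀]

lemma entry_le_colMax [Nonempty (Fin K)] {X : Matrix (Fin K) (Fin K) ℝ}
    (hX : ∀ k ℓ, 0 ≤ X k ℓ) (k ℓ : Fin K) : X k ℓ ≤ colMax X :=
  (Finset.single_le_sum (fun t _ => hX t ℓ) (Finset.mem_univ k)).trans (le_colMax ℓ)

lemma colMin_one [Nonempty (Fin K)] : colMin (1 : Matrix (Fin K) (Fin K) ℝ) = 1 := by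
  have : ∀ ℓ : Fin K, ∑ k, (1 : Matrix (Fin K) (Fin K) ℝ) k ℓ = 1 := by
    intro ℓ
    simp [Matrix.one_apply, Finset.sum_ite_eq]
  exact le_antisymm ((colMin_le (Classical.arbitrary _)).trans_eq (this _))
    (le_colMin fun ℓ => (this ℓ).ge)

lemma colMax_one [Nonempty (Fin K)] : colMax (1 : Matrix (Fin K) (Fin K) ℝ) = 1 := by
  have : ∀ ℓ : Fin K, ∑ k, (1 : Matrix (Fin K) (Fin K) ℝ) k ℓ = 1 := by
    intro ℓ
    simp [Matrix.one_apply, Finset.sum_ite_eq]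
  exact le_antisymm (colMax_le fun ℓ => (this ℓ).le)
    ((this (Classical.arbitrary _)).ge.trans (le_colMax _))


/-! ### Ymat structure -/

lemma Ymat_zero {K : ℕ} (A : Matrix (Fin K) (Fin K) ℝ) (r : ℕ → Fin K → ℝ) :
    Ymat A r 0 = 1 := by simp [Ymat]

lemma Ymat_succ {K : ℕ} (A : Matrix (Fin K) (Fin K) ℝ) (r : ℕ → Fin K → ℝ) (m : ℕ) :
    Ymat A r (m + 1) = Ymat A r m * (Aᵀ * Matrix.diagonal (r (m + 1))) := by
  rw [Ymat, Ymat, List.range_succ, List.map_append, List.prod_append]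
  simp

lemma Ymat_add {K : ℕ} (A : Matrix (Fin K) (Fin K) ℝ) (r : ℕ → Fin K → ℝ) (m n : ℕ) :
    Ymat A r (m + n) = Ymat A r m * Ymat A (fun j => r (m + j)) n := by
  induction n with
  | zero => simp [Ymat_zero]
  | succ n ih =>
      rw [← Nat.add_assoc, Ymat_succ, ih, Ymat_succ, Matrix.mul_assoc, Nat.add_assoc]

lemma Ymat_entry_nonneg {K : ℕ} {A : Matrix (Fin K) (Fin K) ℝ} (hA : ∀ k ℓ, 0 ≤ A k ℓ)
    {r : ℕ → Fin K → ℝ} (hr : ∀ t k, 0 ≤ r (t + 1) k) (m : ℕ) :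
    ∀ k ℓ, 0 ≤ Ymat A r m k ℓ := by
  induction m with
  | zero =>
      rw [Ymat_zero]
      intro k ℓ
      rcases eq_or_ne k ℓ with h | h <;> simp [Matrix.one_apply, h]
  | succ m ih =>
      rw [Ymat_succ]
      refine mul_nonneg' ih (mul_nonneg' (fun k ℓ => hA ℓ k) ?_)
      intro k ℓ
      rcases eq_or_ne k ℓ with h | h <;> simp [Matrix.diagonal_apply, h, hr m ℓ]

lemma colSum_single_factor {K : ℕ} (A : Matrix (Fin K) (Fin K) ℝ) (v : Fin K → ℝ) (ℓ : Fin K) :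
    ∑ k, (Aᵀ * Matrix.diagonal v) k ℓ = (∑ t, A ℓ t) * v ℓ := by
  simp [Matrix.mul_apply, Matrix.diagonal_apply, Finset.sum_mul, Matrix.transpose_apply]

lemma single_factor_entry {K : ℕ} (A : Matrix (Fin K) (Fin K) ℝ) (v : Fin K → ℝ) (t ℓ : Fin K) :
    (Aᵀ * Matrix.diagonal v) t ℓ = A ℓ t * v ℓ := by
  simp [Matrix.mul_apply, Matrix.diagonal_apply, Matrix.transpose_apply]


/-! ### positivity and entry bounds -/

section PosBounds

variable {K : ℕ} [Nonempty (Fin K)] {A : Matrix (Fin K) (Fin K) ℝ}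
  (hA : ∀ k ℓ, 0 ≤ A k ℓ) (hρ : ∀ ℓ, 0 < ∑ t, A ℓ t)

include hA hρ in
lemma exists_A_pos (ℓ : Fin K) : ∃ t, 0 < A ℓ t := by
  have h0 : (∑ _t : Fin K, (0 : ℝ)) < ∑ t, A ℓ t := by simpa using hρ ℓ
  obtain ⟨t, _, ht⟩ := Finset.exists_lt_of_sum_lt h0
  exact ⟨t, ht⟩

include hA hρ in
lemma colSum_Ymat_pos {r : ℕ → Fin K → ℝ} (hr : ∀ t k, 0 < r (t + 1) k) (m : ℕ) :
    ∀ ℓ, 0 < ∑ k, Ymat A r m k ℓ := by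
  induction m with
  | zero =>
      intro ℓ
      rw [Ymat_zero]
      simp [Matrix.one_apply]
  | succ m ih =>
      intro ℓ
      rw [Ymat_succ, colSum_mul]
      obtain ⟨t₀, ht₀⟩ := exists_A_pos hA hρ ℓ
      refine Finset.sum_pos' (fun t _ => ?_) ⟨t₀, Finset.mem_univ t₀, ?_⟩
      · rw [single_factor_entry]
        exact mul_nonneg (le_of_lt (ih t)) (mul_nonneg (hA ℓ t) (hr m ℓ).le)
      · rw [single_factor_entry]
        exact mul_pos (ih t₀) (mul_pos ht₀ (hr m ℓ))

include hA hρ in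
lemma colMin_Ymat_pos {r : ℕ → Fin K → ℝ} (hr : ∀ t k, 0 < r (t + 1) k) (m : ℕ) :
    0 < colMin (Ymat A r m) := by
  obtain ⟨ℓ, hℓ⟩ := exists_colMin (Ymat A r m)
  rw [hℓ]; exact colSum_Ymat_pos hA hρ hr m ℓ

include hA hρ in
lemma colMax_Ymat_pos {r : ℕ → Fin K → ℝ} (hr : ∀ t k, 0 < r (t + 1) k) (m : ℕ) :
    0 < colMax (Ymat A r m) :=
  lt_of_lt_of_le (colMin_Ymat_pos hA hρ hr m)
    ((colMin_le (Classical.arbitrary _)).trans (le_colMax _))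

/-- the generic per-factor quantities -/
noncomputable def cmin (A : Matrix (Fin K) (Fin K) ℝ) (v : Fin K → ℝ) : ℝ :=
  ⨅ ℓ, (∑ t, A ℓ t) * v ℓ

noncomputable def cmax (A : Matrix (Fin K) (Fin K) ℝ) (v : Fin K → ℝ) : ℝ :=
  ⨆ ℓ, (∑ t, A ℓ t) * v ℓ

lemma colMin_factor (v : Fin K → ℝ) : colMin (Aᵀ * Matrix.diagonal v) = cmin A v := by
  unfold colMin cmin
  exact iInf_congr (fun ℓ => colSum_single_factor A v ℓ)

lemma colMax_factor (v : Fin K → ℝ) : colMax (Aᵀ * Matrix.diagonal v) = cmax A v := by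
  unfold colMax cmax
  exact iSup_congr (fun ℓ => colSum_single_factor A v ℓ)

lemma exists_cmin (v : Fin K → ℝ) : ∃ ℓ, cmin A v = (∑ t, A ℓ t) * v ℓ := by
  obtain ⟨ℓ₀, h⟩ := Finite.exists_min (fun ℓ => (∑ t, A ℓ t) * v ℓ)
  exact ⟨ℓ₀, le_antisymm (ciInf_le (Set.Finite.bddBelow (Set.finite_range _)) ℓ₀) (le_ciInf h)⟩

lemma exists_cmax (v : Fin K → ℝ) : ∃ ℓ, cmax A v = (∑ t, A ℓ t) * v ℓ := by
  obtain ⟨ℓ₀, h⟩ := Finite.exists_max (fun ℓ => (∑ t, A ℓ t) * v ℓ)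
  exact ⟨ℓ₀, le_antisymm (ciSup_le h) (le_ciSup (f := fun ℓ => (∑ t, A ℓ t) * v ℓ) (Set.Finite.bddAbove (Set.finite_range _)) ℓ₀)⟩

include hρ in
lemma cmin_pos {v : Fin K → ℝ} (hv : ∀ k, 0 < v k) : 0 < cmin A v := by
  obtain ⟨ℓ, hℓ⟩ := exists_cmin (A := A) v
  rw [hℓ]; exact mul_pos (hρ ℓ) (hv ℓ)

include hρ in
lemma cmax_pos {v : Fin K → ℝ} (hv : ∀ k, 0 < v k) : 0 < cmax A v := by
  obtain ⟨ℓ, hℓ⟩ := exists_cmax (A := A) v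
  rw [hℓ]; exact mul_pos (hρ ℓ) (hv ℓ)

/-- the constant controlling `log` of row sums -/
noncomputable def rowC (A : Matrix (Fin K) (Fin K) ℝ) : ℝ := ⨆ ℓ, |Real.log (∑ t, A ℓ t)|

lemma abs_log_rowsum_le (ℓ : Fin K) : |Real.log (∑ t, A ℓ t)| ≤ rowC A :=
  le_ciSup (f := fun ℓ => |Real.log (∑ t, A ℓ t)|)
    (Set.Finite.bddAbove (Set.finite_range _)) ℓ

include hρ in
lemma log_cmax_le {v : Fin K → ℝ} (hv : ∀ k, 0 < v k) :
    Real.log (cmax A v) ≤ rowC A + ∑ k, |Real.log (v k)| := by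
  obtain ⟨ℓ, hℓ⟩ := exists_cmax (A := A) v
  rw [hℓ, Real.log_mul (hρ ℓ).ne' (hv ℓ).ne']
  refine add_le_add ((le_abs_self _).trans (abs_log_rowsum_le ℓ)) ?_
  exact (le_abs_self _).trans (Finset.single_le_sum
    (f := fun k => |Real.log (v k)|) (fun k _ => abs_nonneg _) (Finset.mem_univ ℓ))

include hρ in
lemma neg_le_log_cmin {v : Fin K → ℝ} (hv : ∀ k, 0 < v k) :
    -(rowC A + ∑ k, |Real.log (v k)|) ≤ Real.log (cmin A v) := by
  obtain ⟨ℓ, hℓ⟩ := exists_cmin (A := A) v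
  rw [hℓ, Real.log_mul (hρ ℓ).ne' (hv ℓ).ne', neg_add]
  refine add_le_add (neg_le_of_abs_le (abs_log_rowsum_le ℓ)) ?_
  refine neg_le_of_abs_le ?_
  exact Finset.single_le_sum (f := fun k => |Real.log (v k)|)
    (fun k _ => abs_nonneg _) (Finset.mem_univ ℓ)

include hA hρ in
lemma log_colMax_Ymat_le {r : ℕ → Fin K → ℝ} (hr : ∀ t k, 0 < r (t + 1) k) (m : ℕ) :
    Real.log (colMax (Ymat A r m)) ≤
      ∑ t ∈ Finset.range m, (rowC A + ∑ k, |Real.log (r (t + 1) k)|) := by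
  induction m with
  | zero => simp [Ymat_zero, colMax_one]
  | succ m ih =>
      rw [Finset.sum_range_succ, Ymat_succ]
      have h1 : colMax (Ymat A r m * (Aᵀ * Matrix.diagonal (r (m + 1)))) ≤
          colMax (Ymat A r m) * cmax A (r (m + 1)) := by
        rw [← colMax_factor]
        refine colMax_mul_le (Ymat_entry_nonneg hA (fun t k => (hr t k).le) m) ?_
        intro k ℓ
        rw [single_factor_entry]
        exact mul_nonneg (hA ℓ k) (hr m ℓ).le
      calc Real.log (colMax (Ymat A r m * (Aᵀ * Matrix.diagonal (r (m + 1)))))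
          ≤ Real.log (colMax (Ymat A r m) * cmax A (r (m + 1))) := by
            refine Real.log_le_log ?_ h1
            rw [← Ymat_succ]
            exact colMax_Ymat_pos hA hρ hr (m + 1)
        _ = Real.log (colMax (Ymat A r m)) + Real.log (cmax A (r (m + 1))) :=
            Real.log_mul (colMax_Ymat_pos hA hρ hr m).ne' (cmax_pos hρ (hr m)).ne'
        _ ≤ _ := add_le_add ih (log_cmax_le hρ (hr m))

include hA hρ in
lemma neg_le_log_colMin_Ymat {r : ℕ → Fin K → ℝ} (hr : ∀ t k, 0 < r (t + 1) k) (m : ℕ) :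
    -∑ t ∈ Finset.range m, (rowC A + ∑ k, |Real.log (r (t + 1) k)|) ≤
      Real.log (colMin (Ymat A r m)) := by
  induction m with
  | zero => simp [Ymat_zero, colMin_one]
  | succ m ih =>
      rw [Finset.sum_range_succ, Ymat_succ, neg_add]
      have h1 : colMin (Ymat A r m) * cmin A (r (m + 1)) ≤
          colMin (Ymat A r m * (Aᵀ * Matrix.diagonal (r (m + 1)))) := by
        rw [← colMin_factor]
        refine colMin_mul_le_colMin_mul (Ymat_entry_nonneg hA (fun t k => (hr t k).le) m) ?_
        intro k ℓ
        rw [single_factor_entry]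
        exact mul_nonneg (hA ℓ k) (hr m ℓ).le
      calc -∑ t ∈ Finset.range m, (rowC A + ∑ k, |Real.log (r (t + 1) k)|) +
            -(rowC A + ∑ k, |Real.log (r (m + 1) k)|)
          ≤ Real.log (colMin (Ymat A r m)) + Real.log (cmin A (r (m + 1))) :=
            add_le_add ih (neg_le_log_cmin hρ (hr m))
        _ = Real.log (colMin (Ymat A r m) * cmin A (r (m + 1))) :=
            (Real.log_mul (colMin_Ymat_pos hA hρ hr m).ne' (cmin_pos hρ (hr m)).ne').symm
        _ ≤ _ := Real.log_le_log (mul_pos (colMin_Ymat_pos hA hρ hr m) (cmin_pos hρ (hr m))) h1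


lemma pow_entry_nonneg (hA : ∀ k ℓ, 0 ≤ A k ℓ) (m : ℕ) : ∀ k ℓ, 0 ≤ (A ^ m) k ℓ := by
  induction m with
  | zero =>
      intro k ℓ
      rcases eq_or_ne k ℓ with h | h <;> simp [pow_zero, Matrix.one_apply, h]
  | succ m ih => rw [pow_succ]; exact mul_nonneg' ih hA

include hA hρ in
lemma pow_entry_pos {n₀ : ℕ} (hprim : ∀ ℓ k, 0 < (A ^ n₀) ℓ k) :
    ∀ m, n₀ ≤ m → ∀ ℓ k, 0 < (A ^ m) ℓ k := by
  intro m hm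
  induction m, hm using Nat.le_induction with
  | base => exact hprim
  | succ m _ ih =>
      intro ℓ k
      rw [pow_succ']
      rw [Matrix.mul_apply]
      obtain ⟨t₀, ht₀⟩ := exists_A_pos hA hρ ℓ
      refine Finset.sum_pos' (fun t _ => mul_nonneg (hA ℓ t) (ih t k).le)
        ⟨t₀, Finset.mem_univ t₀, mul_pos ht₀ (ih t₀ k)⟩

include hA in
lemma Ymat_entry_ge {r : ℕ → Fin K → ℝ} (hr : ∀ t k, 0 < r (t + 1) k) (m : ℕ) :
    ∀ ℓ k, (∏ t ∈ Finset.range m, ⨅ k', r (t + 1) k') * (A ^ m) k ℓ ≤ Ymat A r m ℓ k := by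
  induction m with
  | zero =>
      intro ℓ k
      rw [Ymat_zero, pow_zero]
      rcases eq_or_ne k ℓ with h | h
      · simp [Matrix.one_apply, h]
      · simp [Matrix.one_apply, h, Ne.symm h]
  | succ m ih =>
      intro ℓ k
      have hc0 : (0 : ℝ) ≤ ⨅ k', r (m + 1) k' := le_ciInf fun k' => (hr m k').le
      have hP0 : (0 : ℝ) ≤ ∏ t ∈ Finset.range m, ⨅ k', r (t + 1) k' :=
        Finset.prod_nonneg fun t _ => le_ciInf fun k' => (hr t k').le
      calc (∏ t ∈ Finset.range (m + 1), ⨅ k', r (t + 1) k') * (A ^ (m + 1)) k ℓ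
          = ∑ t, ((∏ t ∈ Finset.range m, ⨅ k', r (t + 1) k') * (A ^ m) t ℓ) *
              (A k t * ⨅ k', r (m + 1) k') := by
            rw [Finset.prod_range_succ, pow_succ', Matrix.mul_apply, Finset.mul_sum]
            refine Finset.sum_congr rfl fun t _ => by ring
        _ ≤ ∑ t, Ymat A r m ℓ t * (A k t * r (m + 1) k) := by
            refine Finset.sum_le_sum fun t _ => ?_
            refine mul_le_mul (ih ℓ t) ?_ (mul_nonneg (hA k t) hc0) ?_
            · exact mul_le_mul_of_nonneg_left
                (ciInf_le (Set.Finite.bddBelow (Set.finite_range _)) k) (hA k t)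
            · exact Ymat_entry_nonneg hA (fun t k => (hr t k).le) m ℓ t
        _ = Ymat A r (m + 1) ℓ k := by
            rw [Ymat_succ, Matrix.mul_apply]
            exact Finset.sum_congr rfl fun t _ => by rw [single_factor_entry]

end PosBounds


/-! ### products as functions of finite tuples, measurability -/

noncomputable def prodFn {K : ℕ} (A : Matrix (Fin K) (Fin K) ℝ) {n : ℕ}
    (v : Fin n → Fin K → ℝ) : Matrix (Fin K) (Fin K) ℝ :=
  (List.ofFn (fun t : Fin n => Aᵀ * Matrix.diagonal (v t))).prod

lemma prodFn_zero {K : ℕ} (A : Matrix (Fin K) (Fin K) ℝ) (v : Fin 0 → Fin K → ℝ) :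
    prodFn A v = 1 := by simp [prodFn]

lemma prodFn_succ {K : ℕ} (A : Matrix (Fin K) (Fin K) ℝ) {n : ℕ} (v : Fin (n + 1) → Fin K → ℝ) :
    prodFn A v =
      prodFn A (fun t : Fin n => v t.castSucc) * (Aᵀ * Matrix.diagonal (v (Fin.last n))) := by
  unfold prodFn
  rw [List.ofFn_succ', List.concat_eq_append, List.prod_append]
  simp

lemma Ymat_eq_prodFn {K : ℕ} (A : Matrix (Fin K) (Fin K) ℝ) (r : ℕ → Fin K → ℝ) (n : ℕ) :
    Ymat A r n = prodFn A (fun t : Fin n => r (t + 1)) := by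
  induction n with
  | zero => rw [Ymat_zero, prodFn_zero]
  | succ n ih =>
      rw [Ymat_succ, prodFn_succ, ih]
      rfl

lemma measurable_prodFn_entry {K : ℕ} (A : Matrix (Fin K) (Fin K) ℝ) (n : ℕ) :
    ∀ ℓ k, Measurable fun v : Fin n → Fin K → ℝ => prodFn A v ℓ k := by
  induction n with
  | zero =>
      intro ℓ k
      simp only [prodFn_zero]
      exact measurable_const
  | succ n ih =>
      intro ℓ k
      have : (fun v : Fin (n + 1) → Fin K → ℝ => prodFn A v ℓ k) =
          fun v => ∑ t, prodFn A (fun t : Fin n => v t.castSucc) ℓ t *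
            (A k t * v (Fin.last n) k) := by
        funext v
        rw [prodFn_succ, Matrix.mul_apply]
        exact Finset.sum_congr rfl fun t _ => by rw [single_factor_entry]
      rw [this]
      refine Finset.measurable_sum _ fun t _ => Measurable.mul ?_ ?_
      · exact (ih ℓ t).comp (measurable_pi_lambda _ fun s => measurable_pi_apply _)
      · exact measurable_const.mul
          ((measurable_pi_apply k).comp (measurable_pi_apply (Fin.last n)))

lemma measurable_log_colMin_prodFn {K : ℕ} (A : Matrix (Fin K) (Fin K) ℝ) (n : ℕ) :
    Measurable fun v : Fin n → Fin K → ℝ => Real.log (colMin (prodFn A v)) := by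
  refine Real.measurable_log.comp ?_
  exact Measurable.iInf fun ℓ =>
    Finset.measurable_sum _ fun k _ => measurable_prodFn_entry A n k ℓ

lemma measurable_log_colMax_prodFn {K : ℕ} (A : Matrix (Fin K) (Fin K) ℝ) (n : ℕ) :
    Measurable fun v : Fin n → Fin K → ℝ => Real.log (colMax (prodFn A v)) := by
  refine Real.measurable_log.comp ?_
  exact Measurable.iSup fun ℓ =>
    Finset.measurable_sum _ fun k _ => measurable_prodFn_entry A n k ℓ


/-! ### identically distributed blocks -/

section Blocks

variable {K : ℕ} {Ω : Type} [MeasureSpace Ω] [IsProbabilityMeasure (ℙ : Measure Ω)]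
  {R : ℕ → Ω → Fin K → ℝ} (hmeas : ∀ i, Measurable (R i))
  (hindep : iIndepFun (fun i => R (i + 1)) ℙ)
  (hident : ∀ i : ℕ, IdentDistrib (R (i + 1)) (R 1) ℙ ℙ)

include hmeas hindep hident in
lemma map_tuple_eq_pi (m n : ℕ) :
    Measure.map (fun ω => fun t : Fin n => R (m + t + 1) ω) ℙ
      = Measure.pi (fun _ : Fin n => Measure.map (R 1) ℙ) := by
  haveI : IsProbabilityMeasure (Measure.map (R 1) ℙ) :=
    Measure.isProbabilityMeasure_map (hmeas 1).aemeasurable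
  symm
  refine Measure.pi_eq fun s hs => ?_
  rw [Measure.map_apply (measurable_pi_lambda _ fun t => hmeas _) (MeasurableSet.univ_pi hs)]
  have hpre : (fun ω => fun t : Fin n => R (m + t + 1) ω) ⁻¹' (Set.univ.pi s)
      = ⋂ t : Fin n, R (m + t + 1) ⁻¹' s t := by
    ext ω; simp [Set.mem_pi]
  rw [hpre]
  classical
  set S : Finset ℕ := Finset.image (fun t : Fin n => m + t) Finset.univ with hS
  set sets : ℕ → Set (Fin K → ℝ) := fun i =>
    ⋂ (t : Fin n) (_ : m + (t : ℕ) = i), s t with hsetsdef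
  have hsets : ∀ t : Fin n, sets (m + t) = s t := by
    intro t
    rw [hsetsdef]
    ext x
    simp only [Set.mem_iInter]
    constructor
    · intro h; exact h t rfl
    · intro hx t' ht'
      have : t' = t := by apply Fin.ext; omega
      rwa [this]
  have h1 : (⋂ t : Fin n, R (m + t + 1) ⁻¹' s t)
      = ⋂ i ∈ S, (fun i => R (i + 1)) i ⁻¹' sets i := by
    ext ω
    simp only [Set.mem_iInter, Set.mem_preimage, hS, Finset.mem_image, Finset.mem_univ, true_and]
    constructor
    · rintro h i ⟨t, rfl⟩
      rw [hsets t]; exact h t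
    · intro h t
      have := h (m + t) ⟨t, rfl⟩
      rwa [hsets t] at this
  rw [h1, hindep.measure_inter_preimage_eq_mul S (fun i _ => ?_)]
  swap
  · rw [hsetsdef]
    exact MeasurableSet.iInter fun t => MeasurableSet.iInter fun _ => hs t
  rw [hS, Finset.prod_image (fun a _ b _ h => by apply Fin.ext; omega)]
  refine Finset.prod_congr rfl fun t _ => ?_
  rw [hsets t]
  have h2 := congrArg (fun μ : Measure (Fin K → ℝ) => μ (s t)) (hident (m + (t : ℕ))).map_eq
  simpa [Measure.map_apply (hmeas _) (hs t), Measure.map_apply (hmeas 1) (hs t)] using h2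

include hmeas hindep hident in
lemma block_identDistrib {n : ℕ} (F : (Fin n → Fin K → ℝ) → ℝ) (hF : Measurable F) (m : ℕ) :
    IdentDistrib (fun ω => F (fun t => R (m + t + 1) ω)) (fun ω => F (fun t => R (t + 1) ω))
      ℙ ℙ := by
  have h0 : (fun ω => F (fun t : Fin n => R (0 + t + 1) ω))
      = fun ω => F (fun t : Fin n => R (t + 1) ω) := by
    simp only [Nat.zero_add]
  have h : IdentDistrib (fun ω => fun t : Fin n => R (m + t + 1) ω)
      (fun ω => fun t : Fin n => R (0 + t + 1) ω) ℙ ℙ := by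
    refine ⟨(measurable_pi_lambda _ fun t => hmeas _).aemeasurable,
      (measurable_pi_lambda _ fun t => hmeas _).aemeasurable, ?_⟩
    rw [map_tuple_eq_pi hmeas hindep hident m, map_tuple_eq_pi hmeas hindep hident 0]
  have h2 : IdentDistrib (fun ω => F (fun t : Fin n => R (m + t + 1) ω))
      (fun ω => F (fun t : Fin n => R (0 + t + 1) ω)) ℙ ℙ := h.comp hF
  rwa [h0] at h2

end Blocks


/-! ### small helpers about infima of positive vectors -/

section InfHelpers

variable {K : ℕ} [Nonempty (Fin K)]

lemma exists_iInf_eq (v : Fin K → ℝ) : ∃ k₀, (⨅ k, v k) = v k₀ := by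
  obtain ⟨k₀, h⟩ := Finite.exists_min v
  exact ⟨k₀, le_antisymm (ciInf_le (Set.Finite.bddBelow (Set.finite_range _)) k₀) (le_ciInf h)⟩

lemma iInf_pos {v : Fin K → ℝ} (hv : ∀ k, 0 < v k) : 0 < ⨅ k, v k := by
  obtain ⟨k₀, h⟩ := exists_iInf_eq v
  rw [h]; exact hv k₀

lemma abs_log_iInf_le (v : Fin K → ℝ) : |Real.log (⨅ k, v k)| ≤ ∑ k, |Real.log (v k)| := by
  obtain ⟨k₀, h⟩ := exists_iInf_eq v
  rw [h]
  exact Finset.single_le_sum (f := fun k => |Real.log (v k)|)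
    (fun k _ => abs_nonneg _) (Finset.mem_univ k₀)

lemma rowC_nonneg {A : Matrix (Fin K) (Fin K) ℝ} : 0 ≤ rowC A :=
  (abs_nonneg _).trans (abs_log_rowsum_le (A := A) (Classical.arbitrary _))

lemma Ymat_entry_pos {A : Matrix (Fin K) (Fin K) ℝ} (hA : ∀ k ℓ, 0 ≤ A k ℓ)
    {r : ℕ → Fin K → ℝ} (hr : ∀ t k, 0 < r (t + 1) k) {m : ℕ} {ℓ k : Fin K}
    (hpos : 0 < (A ^ m) k ℓ) : 0 < Ymat A r m ℓ k :=
  lt_of_lt_of_le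
    (mul_pos (Finset.prod_pos fun t _ => iInf_pos (hr t)) hpos)
    (Ymat_entry_ge hA hr m ℓ k)

/-- the minimum entry of `A ^ m` -/
noncomputable def minEntry (A : Matrix (Fin K) (Fin K) ℝ) : ℝ :=
  ⨅ p : Fin K × Fin K, A p.1 p.2

lemma minEntry_le (A : Matrix (Fin K) (Fin K) ℝ) (k ℓ : Fin K) : minEntry A ≤ A k ℓ :=
  ciInf_le (f := fun p : Fin K × Fin K => A p.1 p.2)
    (Set.Finite.bddBelow (Set.finite_range _)) (⟨k, ℓ⟩ : Fin K × Fin K)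

lemma minEntry_pos {A : Matrix (Fin K) (Fin K) ℝ} (h : ∀ k ℓ, 0 < A k ℓ) : 0 < minEntry A := by
  obtain ⟨p₀, hp⟩ := Finite.exists_min (fun p : Fin K × Fin K => A p.1 p.2)
  have : minEntry A = A p₀.1 p₀.2 := le_antisymm (minEntry_le A p₀.1 p₀.2) (le_ciInf hp)
  rw [this]; exact h _ _

end InfHelpers


/-! ### main probabilistic layer -/
set_option maxHeartbeats 1000000

section Main

variable {K : ℕ} [Nonempty (Fin K)] {A : Matrix (Fin K) (Fin K) ℝ}
  {Ω : Type} [MeasureSpace Ω] [IsProbabilityMeasure (ℙ : Measure Ω)]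
  {R : ℕ → Ω → Fin K → ℝ}
  (hA : ∀ k ℓ, 0 ≤ A k ℓ) (hρ : ∀ ℓ, 0 < ∑ t, A ℓ t)
  (hmeas : ∀ i, Measurable (R i))
  (hindep : iIndepFun (fun i => R (i + 1)) ℙ)
  (hident : ∀ i : ℕ, IdentDistrib (R (i + 1)) (R 1) ℙ ℙ)
  (hposall : ∀ᵐ ω, ∀ t k, 0 < R (t + 1) ω k)
  (hlog : ∀ i k, 1 ≤ i → Integrable (fun ω => Real.log (R i ω k)))

include hmeas in
lemma meas_tup (m n : ℕ) : Measurable fun ω => (fun t : Fin n => R (m + t + 1) ω) :=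
  measurable_pi_lambda _ fun t => hmeas _

lemma Yshift_eq (m n : ℕ) (ω : Ω) :
    Ymat A (fun j => R (m + j) ω) n = prodFn A (fun t : Fin n => R (m + t + 1) ω) :=
  Ymat_eq_prodFn A _ n

lemma Ybase_eq (n : ℕ) (ω : Ω) :
    Ymat A (fun j => R j ω) n = prodFn A (fun t : Fin n => R (t + 1) ω) :=
  Ymat_eq_prodFn A _ n

include hmeas in
lemma meas_logMax (m : ℕ) :
    Measurable fun ω => Real.log (colMax (Ymat A (fun j => R j ω) m)) := by
  have : (fun ω => Real.log (colMax (Ymat A (fun j => R j ω) m)))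
      = (fun v => Real.log (colMax (prodFn A v))) ∘ (fun ω => fun t : Fin m => R (t + 1) ω) := by
    funext ω; simp only [Function.comp_apply, Ybase_eq]
  rw [this]
  exact (measurable_log_colMax_prodFn A m).comp (measurable_pi_lambda _ fun t => hmeas _)

include hmeas in
lemma meas_logMin (m : ℕ) :
    Measurable fun ω => Real.log (colMin (Ymat A (fun j => R j ω) m)) := by
  have : (fun ω => Real.log (colMin (Ymat A (fun j => R j ω) m)))
      = (fun v => Real.log (colMin (prodFn A v))) ∘ (fun ω => fun t : Fin m => R (t + 1) ω) := by
    funext ω; simp only [Function.comp_apply, Ybase_eq]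
  rw [this]
  exact (measurable_log_colMin_prodFn A m).comp (measurable_pi_lambda _ fun t => hmeas _)

include hmeas in
lemma meas_logEntry (m : ℕ) (ℓ k : Fin K) :
    Measurable fun ω => Real.log (Ymat A (fun j => R j ω) m ℓ k) := by
  have : (fun ω => Real.log (Ymat A (fun j => R j ω) m ℓ k))
      = (fun v => Real.log (prodFn A v ℓ k)) ∘ (fun ω => fun t : Fin m => R (t + 1) ω) := by
    funext ω; simp only [Function.comp_apply, Ybase_eq]
  rw [this]
  exact (Real.measurable_log.comp (measurable_prodFn_entry A m ℓ k)).comp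
    (measurable_pi_lambda _ fun t => hmeas _)

/-- the dominating function -/
noncomputable def Gfun (A : Matrix (Fin K) (Fin K) ℝ) (R : ℕ → Ω → Fin K → ℝ) (m : ℕ)
    (ω : Ω) : ℝ :=
  ∑ t ∈ Finset.range m, (rowC A + ∑ k, |Real.log (R (t + 1) ω k)|)

include hlog in
lemma integrable_G (m : ℕ) : Integrable (Gfun A R m) := by
  refine integrable_finset_sum _ fun t _ => (integrable_const _).add ?_
  exact integrable_finset_sum _ fun k _ => (hlog (t + 1) k (Nat.succ_le_succ (Nat.zero_le t))).abs

include hA hρ hposall in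
lemma ae_abs_logMax_le (m : ℕ) :
    ∀ᵐ ω, |Real.log (colMax (Ymat A (fun j => R j ω) m))| ≤ Gfun A R m ω := by
  filter_upwards [hposall] with ω hω
  have hub := log_colMax_Ymat_le (r := fun j => R j ω) hA hρ hω m
  have hlb := neg_le_log_colMin_Ymat (r := fun j => R j ω) hA hρ hω m
  have hcp := Real.log_le_log (colMin_Ymat_pos (r := fun j => R j ω) hA hρ hω m)
    (colMin_le_colMax (Ymat A (fun j => R j ω) m))
  simp only [Gfun]
  rw [abs_le]
  exact ⟨le_trans hlb hcp, hub⟩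

include hA hρ hposall in
lemma ae_abs_logMin_le (m : ℕ) :
    ∀ᵐ ω, |Real.log (colMin (Ymat A (fun j => R j ω) m))| ≤ Gfun A R m ω := by
  filter_upwards [hposall] with ω hω
  have hub := log_colMax_Ymat_le (r := fun j => R j ω) hA hρ hω m
  have hlb := neg_le_log_colMin_Ymat (r := fun j => R j ω) hA hρ hω m
  have hcp := Real.log_le_log (colMin_Ymat_pos (r := fun j => R j ω) hA hρ hω m)
    (colMin_le_colMax (Ymat A (fun j => R j ω) m))
  simp only [Gfun]
  rw [abs_le]
  exact ⟨by linarith, le_trans hcp hub⟩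

include hA hρ hmeas hposall hlog in
lemma integrable_logMax (m : ℕ) :
    Integrable fun ω => Real.log (colMax (Ymat A (fun j => R j ω) m)) :=
  Integrable.mono' (integrable_G hlog m) (meas_logMax hmeas m).aestronglyMeasurable
    (ae_abs_logMax_le hA hρ hposall m)

include hA hρ hmeas hposall hlog in
lemma integrable_logMin (m : ℕ) :
    Integrable fun ω => Real.log (colMin (Ymat A (fun j => R j ω) m)) :=
  Integrable.mono' (integrable_G hlog m) (meas_logMin hmeas m).aestronglyMeasurable
    (ae_abs_logMin_le hA hρ hposall m)

include hA hρ hposall in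
lemma ae_abs_logEntry_le (m : ℕ) (hApow : ∀ ℓ k, 0 < (A ^ m) ℓ k) (ℓ k : Fin K) :
    ∀ᵐ ω, |Real.log (Ymat A (fun j => R j ω) m ℓ k)|
      ≤ |Real.log (minEntry (A ^ m))| + Gfun A R m ω := by
  filter_upwards [hposall] with ω hω
  have hprodpos : 0 < ∏ t ∈ Finset.range m, ⨅ k', R (t + 1) ω k' :=
    Finset.prod_pos fun t _ => iInf_pos (hω t)
  have hepos : 0 < Ymat A (fun j => R j ω) m ℓ k :=
    Ymat_entry_pos (r := fun j => R j ω) hA hω (hApow k ℓ)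
  have hub : Real.log (Ymat A (fun j => R j ω) m ℓ k) ≤ Gfun A R m ω := by
    have h1 : Real.log (Ymat A (fun j => R j ω) m ℓ k)
        ≤ Real.log (colMax (Ymat A (fun j => R j ω) m)) :=
      Real.log_le_log hepos
        (entry_le_colMax (Ymat_entry_nonneg (r := fun j => R j ω) hA
          (fun t k' => (hω t k').le) m) ℓ k)
    exact h1.trans (log_colMax_Ymat_le (r := fun j => R j ω) hA hρ hω m)
  have hlbase : Real.log ((∏ t ∈ Finset.range m, ⨅ k', R (t + 1) ω k') * (A ^ m) k ℓ)
      ≤ Real.log (Ymat A (fun j => R j ω) m ℓ k) :=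
    Real.log_le_log (mul_pos hprodpos (hApow k ℓ))
      (Ymat_entry_ge (r := fun j => R j ω) hA hω m ℓ k)
  have hsplit : Real.log ((∏ t ∈ Finset.range m, ⨅ k', R (t + 1) ω k') * (A ^ m) k ℓ)
      = (∑ t ∈ Finset.range m, Real.log (⨅ k', R (t + 1) ω k')) + Real.log ((A ^ m) k ℓ) := by
    rw [Real.log_mul hprodpos.ne' (hApow k ℓ).ne',
      Real.log_prod (fun t _ => (iInf_pos (hω t)).ne')]
  have h2 : -Gfun A R m ω ≤ ∑ t ∈ Finset.range m, Real.log (⨅ k', R (t + 1) ω k') := by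
    simp only [Gfun]
    rw [← Finset.sum_neg_distrib]
    refine Finset.sum_le_sum fun t _ => ?_
    have hC := rowC_nonneg (A := A)
    have habs := abs_log_iInf_le (fun k' => R (t + 1) ω k')
    have hna := neg_abs_le (Real.log (⨅ k', R (t + 1) ω k'))
    linarith
  have h3 : -|Real.log (minEntry (A ^ m))| ≤ Real.log ((A ^ m) k ℓ) :=
    le_trans (neg_abs_le _)
      (Real.log_le_log (minEntry_pos hApow) (minEntry_le _ k ℓ))
  have hG0 : 0 ≤ |Real.log (minEntry (A ^ m))| := abs_nonneg _
  rw [abs_le]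
  constructor
  · rw [hsplit] at hlbase
    linarith
  · linarith

include hA hρ hmeas hposall hlog in
lemma integrable_logEntry (m : ℕ) (hApow : ∀ ℓ k, 0 < (A ^ m) ℓ k) (ℓ k : Fin K) :
    Integrable fun ω => Real.log (Ymat A (fun j => R j ω) m ℓ k) := by
  refine Integrable.mono'
    (g := fun ω => |Real.log (minEntry (A ^ m))| + Gfun A R m ω)
    ((integrable_const _).add (integrable_G hlog m))
    (meas_logEntry hmeas m ℓ k).aestronglyMeasurable ?_
  exact ae_abs_logEntry_le hA hρ hposall m hApow ℓ k

include hmeas hindep hident in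
lemma blockID_logMax (m n : ℕ) :
    IdentDistrib (fun ω => Real.log (colMax (Ymat A (fun j => R (m + j) ω) n)))
      (fun ω => Real.log (colMax (Ymat A (fun j => R j ω) n))) ℙ ℙ := by
  have h := block_identDistrib hmeas hindep hident
    (fun v : Fin n → Fin K → ℝ => Real.log (colMax (prodFn A v)))
    (measurable_log_colMax_prodFn A n) m
  have e1 : (fun ω => Real.log (colMax (prodFn A (fun t : Fin n => R (m + t + 1) ω))))
      = fun ω => Real.log (colMax (Ymat A (fun j => R (m + j) ω) n)) := by
    funext ω; rw [← Yshift_eq]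
  have e2 : (fun ω => Real.log (colMax (prodFn A (fun t : Fin n => R (t + 1) ω))))
      = fun ω => Real.log (colMax (Ymat A (fun j => R j ω) n)) := by
    funext ω; rw [← Ybase_eq]
  rwa [e1, e2] at h

include hmeas hindep hident in
lemma blockID_logMin (m n : ℕ) :
    IdentDistrib (fun ω => Real.log (colMin (Ymat A (fun j => R (m + j) ω) n)))
      (fun ω => Real.log (colMin (Ymat A (fun j => R j ω) n))) ℙ ℙ := by
  have h := block_identDistrib hmeas hindep hident
    (fun v : Fin n → Fin K → ℝ => Real.log (colMin (prodFn A v)))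
    (measurable_log_colMin_prodFn A n) m
  have e1 : (fun ω => Real.log (colMin (prodFn A (fun t : Fin n => R (m + t + 1) ω))))
      = fun ω => Real.log (colMin (Ymat A (fun j => R (m + j) ω) n)) := by
    funext ω; rw [← Yshift_eq]
  have e2 : (fun ω => Real.log (colMin (prodFn A (fun t : Fin n => R (t + 1) ω))))
      = fun ω => Real.log (colMin (Ymat A (fun j => R j ω) n)) := by
    funext ω; rw [← Ybase_eq]
  rwa [e1, e2] at h

include hA hρ hmeas hindep hident hposall hlog in
lemma f_subadd (m n : ℕ) :
    ∫ ω, Real.log (colMax (Ymat A (fun j => R j ω) (m + n)))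
      ≤ (∫ ω, Real.log (colMax (Ymat A (fun j => R j ω) m)))
        + ∫ ω, Real.log (colMax (Ymat A (fun j => R j ω) n)) := by
  have hID := blockID_logMax (A := A) hmeas hindep hident m n
  have hintB : Integrable (fun ω => Real.log (colMax (Ymat A (fun j => R (m + j) ω) n))) :=
    hID.integrable_iff.mpr (integrable_logMax hA hρ hmeas hposall hlog n)
  have hae : ∀ᵐ ω, Real.log (colMax (Ymat A (fun j => R j ω) (m + n)))
      ≤ Real.log (colMax (Ymat A (fun j => R j ω) m))
        + Real.log (colMax (Ymat A (fun j => R (m + j) ω) n)) := by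
    filter_upwards [hposall] with ω hω
    have hYm := Ymat_entry_nonneg (r := fun j => R j ω) hA (fun t k => (hω t k).le) m
    have hB := Ymat_entry_nonneg (r := fun j => R (m + j) ω) hA
      (fun t k => (hω (m + t) k).le) n
    have hmul : colMax (Ymat A (fun j => R j ω) (m + n))
        ≤ colMax (Ymat A (fun j => R j ω) m) * colMax (Ymat A (fun j => R (m + j) ω) n) := by
      rw [Ymat_add]
      exact colMax_mul_le hYm hB
    have hpos : 0 < colMax (Ymat A (fun j => R j ω) (m + n)) :=
      colMax_Ymat_pos (r := fun j => R j ω) hA hρ hω (m + n)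
    have hpm : 0 < colMax (Ymat A (fun j => R j ω) m) :=
      colMax_Ymat_pos (r := fun j => R j ω) hA hρ hω m
    have hpb : 0 < colMax (Ymat A (fun j => R (m + j) ω) n) :=
      colMax_Ymat_pos (r := fun j => R (m + j) ω) hA hρ (fun t k => hω (m + t) k) n
    calc Real.log (colMax (Ymat A (fun j => R j ω) (m + n)))
        ≤ Real.log (colMax (Ymat A (fun j => R j ω) m)
            * colMax (Ymat A (fun j => R (m + j) ω) n)) := Real.log_le_log hpos hmul
      _ = _ := Real.log_mul hpm.ne' hpb.ne'
  calc ∫ ω, Real.log (colMax (Ymat A (fun j => R j ω) (m + n)))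
      ≤ ∫ ω, (Real.log (colMax (Ymat A (fun j => R j ω) m))
            + Real.log (colMax (Ymat A (fun j => R (m + j) ω) n))) :=
        integral_mono_ae (integrable_logMax hA hρ hmeas hposall hlog (m + n))
          ((integrable_logMax hA hρ hmeas hposall hlog m).add hintB) hae
    _ = (∫ ω, Real.log (colMax (Ymat A (fun j => R j ω) m)))
        + ∫ ω, Real.log (colMax (Ymat A (fun j => R (m + j) ω) n)) :=
        integral_add (integrable_logMax hA hρ hmeas hposall hlog m) hintB
    _ = _ := by rw [hID.integral_eq]

include hA hρ hmeas hindep hident hposall hlog in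
lemma g_superadd (m n : ℕ) :
    (∫ ω, Real.log (colMin (Ymat A (fun j => R j ω) m)))
        + ∫ ω, Real.log (colMin (Ymat A (fun j => R j ω) n))
      ≤ ∫ ω, Real.log (colMin (Ymat A (fun j => R j ω) (m + n))) := by
  have hID := blockID_logMin (A := A) hmeas hindep hident m n
  have hintB : Integrable (fun ω => Real.log (colMin (Ymat A (fun j => R (m + j) ω) n))) :=
    hID.integrable_iff.mpr (integrable_logMin hA hρ hmeas hposall hlog n)
  have hae : ∀ᵐ ω, Real.log (colMin (Ymat A (fun j => R j ω) m))
        + Real.log (colMin (Ymat A (fun j => R (m + j) ω) n))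
      ≤ Real.log (colMin (Ymat A (fun j => R j ω) (m + n))) := by
    filter_upwards [hposall] with ω hω
    have hYm := Ymat_entry_nonneg (r := fun j => R j ω) hA (fun t k => (hω t k).le) m
    have hB := Ymat_entry_nonneg (r := fun j => R (m + j) ω) hA
      (fun t k => (hω (m + t) k).le) n
    have hmul : colMin (Ymat A (fun j => R j ω) m) * colMin (Ymat A (fun j => R (m + j) ω) n)
        ≤ colMin (Ymat A (fun j => R j ω) (m + n)) := by
      rw [Ymat_add]
      exact colMin_mul_le_colMin_mul hYm hB
    have hpm : 0 < colMin (Ymat A (fun j => R j ω) m) :=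
      colMin_Ymat_pos (r := fun j => R j ω) hA hρ hω m
    have hpb : 0 < colMin (Ymat A (fun j => R (m + j) ω) n) :=
      colMin_Ymat_pos (r := fun j => R (m + j) ω) hA hρ (fun t k => hω (m + t) k) n
    calc Real.log (colMin (Ymat A (fun j => R j ω) m))
          + Real.log (colMin (Ymat A (fun j => R (m + j) ω) n))
        = Real.log (colMin (Ymat A (fun j => R j ω) m)
            * colMin (Ymat A (fun j => R (m + j) ω) n)) :=
          (Real.log_mul hpm.ne' hpb.ne').symm
      _ ≤ _ := Real.log_le_log (mul_pos hpm hpb) hmul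
  calc (∫ ω, Real.log (colMin (Ymat A (fun j => R j ω) m)))
        + ∫ ω, Real.log (colMin (Ymat A (fun j => R j ω) n))
      = (∫ ω, Real.log (colMin (Ymat A (fun j => R j ω) m)))
        + ∫ ω, Real.log (colMin (Ymat A (fun j => R (m + j) ω) n)) := by
        rw [hID.integral_eq]
    _ = ∫ ω, (Real.log (colMin (Ymat A (fun j => R j ω) m))
        + Real.log (colMin (Ymat A (fun j => R (m + j) ω) n))) :=
        (integral_add (integrable_logMin hA hρ hmeas hposall hlog m) hintB).symm
    _ ≤ _ :=
        integral_mono_ae ((integrable_logMin hA hρ hmeas hposall hlog m).add hintB)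
          (integrable_logMin hA hρ hmeas hposall hlog (m + n)) hae

lemma f_zero : ∫ ω : Ω, Real.log (colMax (Ymat A (fun j => R j ω) 0)) = 0 := by
  simp [Ymat_zero, colMax_one]

lemma g_zero : ∫ ω : Ω, Real.log (colMin (Ymat A (fun j => R j ω) 0)) = 0 := by
  simp [Ymat_zero, colMin_one]

include hA hρ hmeas hindep hident hposall hlog in
lemma f_iter (j q : ℕ) :
    ∫ ω, Real.log (colMax (Ymat A (fun j' => R j' ω) (j * q)))
      ≤ (q : ℝ) * ∫ ω, Real.log (colMax (Ymat A (fun j' => R j' ω) j)) := by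
  induction q with
  | zero => simp [Nat.mul_zero, f_zero]
  | succ q ih =>
      have h1 := f_subadd hA hρ hmeas hindep hident hposall hlog (j * q) j
      rw [← Nat.mul_succ] at h1
      push_cast
      linarith

include hA hρ hmeas hindep hident hposall hlog in
lemma g_iter (i q : ℕ) :
    (q : ℝ) * ∫ ω, Real.log (colMin (Ymat A (fun j' => R j' ω) i))
      ≤ ∫ ω, Real.log (colMin (Ymat A (fun j' => R j' ω) (i * q))) := by
  induction q with
  | zero => simp [Nat.mul_zero, g_zero]
  | succ q ih =>
      have h1 := g_superadd hA hρ hmeas hindep hident hposall hlog (i * q) i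
      rw [← Nat.mul_succ] at h1
      push_cast
      linarith

include hA hρ hmeas hposall hlog in
lemma entry_integral_le_f {n₀ : ℕ} (hApow : ∀ ℓ k, 0 < (A ^ n₀) ℓ k) {m : ℕ} (hm : n₀ ≤ m)
    (ℓ k : Fin K) :
    ∫ ω, Real.log (Ymat A (fun j => R j ω) m ℓ k)
      ≤ ∫ ω, Real.log (colMax (Ymat A (fun j => R j ω) m)) := by
  have hApm : ∀ ℓ k, 0 < (A ^ m) ℓ k := pow_entry_pos hA hρ hApow m hm
  refine integral_mono_ae (integrable_logEntry hA hρ hmeas hposall hlog m hApm ℓ k)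
    (integrable_logMax hA hρ hmeas hposall hlog m) ?_
  filter_upwards [hposall] with ω hω
  exact Real.log_le_log (Ymat_entry_pos (r := fun j => R j ω) hA hω (hApm k ℓ))
    (entry_le_colMax (Ymat_entry_nonneg (r := fun j => R j ω) hA
      (fun t k' => (hω t k').le) m) ℓ k)

/-- correction term -/
noncomputable def Wfun (A : Matrix (Fin K) (Fin K) ℝ) (R : ℕ → Ω → Fin K → ℝ) (n₀ : ℕ)
    (ω : Ω) : ℝ :=
  Real.log (colMax (Ymat A (fun j => R j ω) n₀)) - Real.log (minEntry (A ^ n₀))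
    - ∑ s ∈ Finset.range n₀, Real.log (⨅ k, R (s + 1) ω k)

include hmeas hlog in
lemma integrable_log_iInf (s : ℕ) :
    Integrable fun ω => Real.log (⨅ k, R (s + 1) ω k) := by
  refine Integrable.mono' (g := fun ω => ∑ k, |Real.log (R (s + 1) ω k)|)
    (integrable_finset_sum _ fun k _ => (hlog (s + 1) k (Nat.succ_le_succ (Nat.zero_le s))).abs)
    ?_ (ae_of_all _ fun ω => abs_log_iInf_le _)
  exact (Real.measurable_log.comp (Measurable.iInf fun k =>
    (measurable_pi_apply k).comp (hmeas (s + 1)))).aestronglyMeasurable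

include hA hρ hmeas hposall hlog in
lemma integrable_W (n₀ : ℕ) : Integrable (Wfun A R n₀) := by
  have h1 := integrable_logMax hA hρ hmeas hposall hlog n₀
  have h2 : Integrable (fun ω : Ω =>
      ∑ s ∈ Finset.range n₀, Real.log (⨅ k, R (s + 1) ω k)) :=
    integrable_finset_sum _ fun s _ => integrable_log_iInf hmeas hlog s
  exact (h1.sub (integrable_const _)).sub h2

include hA hρ hmeas hposall hlog in
lemma g_le_entry_add_W {n₀ : ℕ} (hApow : ∀ ℓ k, 0 < (A ^ n₀) ℓ k) {m : ℕ} (hm : n₀ ≤ m)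
    (ℓ : Fin K) :
    ∫ ω, Real.log (colMin (Ymat A (fun j => R j ω) m))
      ≤ (∫ ω, Real.log (Ymat A (fun j => R j ω) m ℓ ℓ)) + ∫ ω, Wfun A R n₀ ω := by
  have hApm : ∀ ℓ k, 0 < (A ^ m) ℓ k := pow_entry_pos hA hρ hApow m hm
  obtain ⟨nn, rfl⟩ := Nat.exists_eq_add_of_le hm
  have hae : ∀ᵐ ω, Real.log (colMin (Ymat A (fun j => R j ω) (n₀ + nn)))
      ≤ Real.log (Ymat A (fun j => R j ω) (n₀ + nn) ℓ ℓ) + Wfun A R n₀ ω := by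
    filter_upwards [hposall] with ω hω
    have hF0 := Ymat_entry_nonneg (r := fun j => R j ω) hA (fun t k => (hω t k).le) n₀
    have hB0 := Ymat_entry_nonneg (r := fun j => R (n₀ + j) ω) hA
      (fun t k => (hω (n₀ + t) k).le) nn
    have hpminB : 0 < colMin (Ymat A (fun j => R (n₀ + j) ω) nn) :=
      colMin_Ymat_pos (r := fun j => R (n₀ + j) ω) hA hρ (fun t k => hω (n₀ + t) k) nn
    have hpmaxF : 0 < colMax (Ymat A (fun j => R j ω) n₀) :=
      colMax_Ymat_pos (r := fun j => R j ω) hA hρ hω n₀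
    have hpminY : 0 < colMin (Ymat A (fun j => R j ω) (n₀ + nn)) :=
      colMin_Ymat_pos (r := fun j => R j ω) hA hρ hω (n₀ + nn)
    have hPpos : 0 < ∏ s ∈ Finset.range n₀, ⨅ k, R (s + 1) ω k :=
      Finset.prod_pos fun s _ => iInf_pos (hω s)
    have hδpos : 0 < minEntry (A ^ n₀) := minEntry_pos hApow
    -- step 1
    have step1 : colMin (Ymat A (fun j => R j ω) (n₀ + nn))
        ≤ colMax (Ymat A (fun j => R j ω) n₀)
          * colMin (Ymat A (fun j => R (n₀ + j) ω) nn) := by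
      rw [Ymat_add]
      exact colMin_mul_le_colMax_mul_colMin hF0 hB0
    -- step 2
    have step2 : minEntry (A ^ n₀) * (∏ s ∈ Finset.range n₀, ⨅ k, R (s + 1) ω k)
          * colMin (Ymat A (fun j => R (n₀ + j) ω) nn)
        ≤ Ymat A (fun j => R j ω) (n₀ + nn) ℓ ℓ := by
      rw [Ymat_add, Matrix.mul_apply]
      have hterm : ∀ t, minEntry (A ^ n₀) * (∏ s ∈ Finset.range n₀, ⨅ k, R (s + 1) ω k)
            * Ymat A (fun j => R (n₀ + j) ω) nn t ℓ
          ≤ Ymat A (fun j => R j ω) n₀ ℓ t * Ymat A (fun j => R (n₀ + j) ω) nn t ℓ := by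
        intro t
        refine mul_le_mul_of_nonneg_right ?_ (hB0 t ℓ)
        calc minEntry (A ^ n₀) * (∏ s ∈ Finset.range n₀, ⨅ k, R (s + 1) ω k)
            ≤ (A ^ n₀) t ℓ * (∏ s ∈ Finset.range n₀, ⨅ k, R (s + 1) ω k) :=
              mul_le_mul_of_nonneg_right (minEntry_le _ t ℓ) hPpos.le
          _ = (∏ s ∈ Finset.range n₀, ⨅ k, R (s + 1) ω k) * (A ^ n₀) t ℓ := mul_comm _ _
          _ ≤ Ymat A (fun j => R j ω) n₀ ℓ t :=
              Ymat_entry_ge (r := fun j => R j ω) hA hω n₀ ℓ t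
      calc minEntry (A ^ n₀) * (∏ s ∈ Finset.range n₀, ⨅ k, R (s + 1) ω k)
            * colMin (Ymat A (fun j => R (n₀ + j) ω) nn)
          ≤ minEntry (A ^ n₀) * (∏ s ∈ Finset.range n₀, ⨅ k, R (s + 1) ω k)
            * ∑ t, Ymat A (fun j => R (n₀ + j) ω) nn t ℓ :=
            mul_le_mul_of_nonneg_left (colMin_le ℓ) (mul_pos hδpos hPpos).le
        _ = ∑ t, minEntry (A ^ n₀) * (∏ s ∈ Finset.range n₀, ⨅ k, R (s + 1) ω k)
            * Ymat A (fun j => R (n₀ + j) ω) nn t ℓ := by rw [Finset.mul_sum]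
        _ ≤ ∑ t, Ymat A (fun j => R j ω) n₀ ℓ t * Ymat A (fun j => R (n₀ + j) ω) nn t ℓ :=
            Finset.sum_le_sum fun t _ => hterm t
    -- logs
    have a1 : Real.log (colMin (Ymat A (fun j => R j ω) (n₀ + nn)))
        ≤ Real.log (colMax (Ymat A (fun j => R j ω) n₀))
          + Real.log (colMin (Ymat A (fun j => R (n₀ + j) ω) nn)) := by
      refine (Real.log_le_log hpminY step1).trans_eq ?_
      exact Real.log_mul hpmaxF.ne' hpminB.ne'
    have a2 : Real.log (minEntry (A ^ n₀))
          + Real.log (∏ s ∈ Finset.range n₀, ⨅ k, R (s + 1) ω k)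
          + Real.log (colMin (Ymat A (fun j => R (n₀ + j) ω) nn))
        ≤ Real.log (Ymat A (fun j => R j ω) (n₀ + nn) ℓ ℓ) := by
      refine le_trans (le_of_eq ?_) (Real.log_le_log
        (mul_pos (mul_pos hδpos hPpos) hpminB) step2)
      rw [Real.log_mul (mul_pos hδpos hPpos).ne' hpminB.ne',
        Real.log_mul hδpos.ne' hPpos.ne']
    have a4 : Real.log (∏ s ∈ Finset.range n₀, ⨅ k, R (s + 1) ω k)
        = ∑ s ∈ Finset.range n₀, Real.log (⨅ k, R (s + 1) ω k) :=
      Real.log_prod (fun s _ => (iInf_pos (hω s)).ne')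
    simp only [Wfun]
    rw [a4] at a2
    linarith
  have hint1 := integrable_logMin hA hρ hmeas hposall hlog (n₀ + nn)
  have hint2 := integrable_logEntry hA hρ hmeas hposall hlog (n₀ + nn) hApm ℓ ℓ
  have hint3 := integrable_W hA hρ hmeas hposall hlog n₀
  calc ∫ ω, Real.log (colMin (Ymat A (fun j => R j ω) (n₀ + nn)))
      ≤ ∫ ω, (Real.log (Ymat A (fun j => R j ω) (n₀ + nn) ℓ ℓ) + Wfun A R n₀ ω) :=
        integral_mono_ae hint1 (hint2.add hint3) hae
    _ = _ := integral_add hint2 hint3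

end Main

end BSAux

open BSAux

/-- **Bounds based on subadditivity.** For all `i, j ≥ 1`,
`(1/i) E[log ‖Y_i‖₋] ≤ γ ≤ (1/j) E[log ‖Y_j‖₁]`. -/
theorem bounds_based_on_subadditivity
    {K : ℕ} (hK : 0 < K)
    (A : Matrix (Fin K) (Fin K) ℝ)
    (hA_nonneg : ∀ ℓ k, 0 ≤ A ℓ k)
    (hA_stoch : ∀ k, ∑ ℓ, A ℓ k = 1)
    (hA_prim : ∃ n : ℕ, 1 ≤ n ∧ ∀ ℓ k, 0 < (A ^ n) ℓ k)
    {Ω : Type} [MeasureSpace Ω] [IsProbabilityMeasure (ℙ : Measure Ω)]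
    (R : ℕ → Ω → Fin K → ℝ)
    (hmeas : ∀ i, Measurable (R i))
    (hindep : iIndepFun (fun i => R (i + 1)) ℙ)
    (hident : ∀ i : ℕ, IdentDistrib (R (i + 1)) (R 1) ℙ ℙ)
    (hpos : ∀ i k, 1 ≤ i → ∀ᵐ ω, 0 < R i ω k)
    (hmean : ∀ i k, 1 ≤ i → ∫ ω, R i ω k = 1)
    (hint : ∀ i k, 1 ≤ i → Integrable (fun ω => R i ω k))
    (hlog : ∀ i k, 1 ≤ i → Integrable (fun ω => Real.log (R i ω k)))
    (γ : ℝ)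
    (hγ : ∀ ℓ k : Fin K, ∀ᵐ ω, Tendsto
      (fun i : ℕ => (i : ℝ)⁻¹ * Real.log (Ymat A (fun j => R j ω) i ℓ k)) atTop (nhds γ))
    (hγE : ∀ ℓ k : Fin K, Tendsto
      (fun i : ℕ => (i : ℝ)⁻¹ * ∫ ω, Real.log (Ymat A (fun j => R j ω) i ℓ k))
      atTop (nhds γ)) :
    ∀ i j : ℕ, 1 ≤ i → 1 ≤ j →
      (i : ℝ)⁻¹ * ∫ ω, Real.log (colMin (Ymat A (fun m => R m ω) i)) ≤ γ ∧
      γ ≤ (j : ℝ)⁻¹ * ∫ ω, Real.log (colMax (Ymat A (fun m => R m ω) j)) := by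
  haveI : Nonempty (Fin K) := ⟨⟨0, hK⟩⟩
  obtain ⟨n₀, hn₀1, hprim⟩ := hA_prim
  -- positive row sums
  have hρ : ∀ ℓ, 0 < ∑ t, A ℓ t := by
    intro ℓ
    rcases lt_or_eq_of_le (Finset.sum_nonneg fun t _ => hA_nonneg ℓ t) with h | h
    · exact h
    · exfalso
      have hzero : ∀ t, A ℓ t = 0 := by
        intro t
        have := (Finset.sum_eq_zero_iff_of_nonneg fun t _ => hA_nonneg ℓ t).mp h.symm
        exact this t (Finset.mem_univ t)
      obtain ⟨s, rfl⟩ := Nat.exists_eq_add_of_le hn₀1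
      have : (A ^ (1 + s)) ℓ ℓ = 0 := by
        rw [pow_add, pow_one, Matrix.mul_apply]
        exact Finset.sum_eq_zero fun t _ => by rw [hzero t, zero_mul]
      exact absurd (hprim ℓ ℓ) (by rw [this]; exact lt_irrefl 0)
  -- a.e. positivity of all the r's
  have hposall : ∀ᵐ ω, ∀ t k, 0 < R (t + 1) ω k := by
    rw [MeasureTheory.ae_all_iff]
    intro t
    rw [MeasureTheory.ae_all_iff]
    intro k
    exact hpos (t + 1) k (Nat.succ_le_succ (Nat.zero_le t))
  set ℓ₀ : Fin K := ⟨0, hK⟩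
  intro i j hi hj
  constructor
  · -- lower bound part
    set gi := ∫ ω, Real.log (colMin (Ymat A (fun m => R m ω) i)) with hgi
    have htend : Tendsto (fun q : ℕ => i * q) atTop atTop :=
      tendsto_atTop_mono (fun q => Nat.le_mul_of_pos_left q (by omega)) tendsto_id
    have hEntry : Tendsto (fun q : ℕ => ((i * q : ℕ) : ℝ)⁻¹
        * ∫ ω, Real.log (Ymat A (fun j' => R j' ω) (i * q) ℓ₀ ℓ₀)) atTop (nhds γ) :=
      (hγE ℓ₀ ℓ₀).comp htend
    have hCast : Tendsto (fun q : ℕ => ((i * q : ℕ) : ℝ)) atTop atTop :=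
      tendsto_natCast_atTop_atTop.comp htend
    have hCzero : Tendsto (fun q : ℕ => ((i * q : ℕ) : ℝ)⁻¹ * ∫ ω, Wfun A R n₀ ω)
        atTop (nhds 0) := by
      have := hCast.inv_tendsto_atTop.mul_const (∫ ω, Wfun A R n₀ ω)
      simpa using this
    have hlim : Tendsto (fun q : ℕ => ((i * q : ℕ) : ℝ)⁻¹
        * (∫ ω, Real.log (Ymat A (fun j' => R j' ω) (i * q) ℓ₀ ℓ₀))
        + ((i * q : ℕ) : ℝ)⁻¹ * ∫ ω, Wfun A R n₀ ω) atTop (nhds γ) := by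
      have := hEntry.add hCzero
      simpa using this
    refine ge_of_tendsto hlim ?_
    rw [Filter.eventually_atTop]
    refine ⟨max 1 n₀, fun q hq => ?_⟩
    have h1q : 1 ≤ q := le_trans (le_max_left _ _) hq
    have hn₀q : n₀ ≤ i * q := le_trans (le_max_right _ _) (hq.trans
      (Nat.le_mul_of_pos_left q (by omega)))
    have key1 : (q : ℝ) * gi ≤ (∫ ω, Real.log (Ymat A (fun j' => R j' ω) (i * q) ℓ₀ ℓ₀))
        + ∫ ω, Wfun A R n₀ ω := by
      refine le_trans (g_iter hA_nonneg hρ hmeas hindep hident hposall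
        (fun i' k' h => hlog i' k' h) i q) ?_
      exact g_le_entry_add_W hA_nonneg hρ hmeas hposall (fun i' k' h => hlog i' k' h)
        hprim hn₀q ℓ₀
    have hipos : (0 : ℝ) < (i : ℝ) := by exact_mod_cast (by omega : 0 < i)
    have hqpos : (0 : ℝ) < (q : ℝ) := by exact_mod_cast (by omega : 0 < q)
    have e : ((i * q : ℕ) : ℝ)⁻¹ * ((q : ℝ) * gi) = (i : ℝ)⁻¹ * gi := by
      push_cast
      field_simp
    calc (i : ℝ)⁻¹ * gi = ((i * q : ℕ) : ℝ)⁻¹ * ((q : ℝ) * gi) := e.symm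
      _ ≤ ((i * q : ℕ) : ℝ)⁻¹ * ((∫ ω, Real.log (Ymat A (fun j' => R j' ω) (i * q) ℓ₀ ℓ₀))
          + ∫ ω, Wfun A R n₀ ω) := by
          refine mul_le_mul_of_nonneg_left key1 ?_
          positivity
      _ = _ := by ring
  · -- upper bound part
    set fj := ∫ ω, Real.log (colMax (Ymat A (fun m => R m ω) j)) with hfj
    have htend : Tendsto (fun q : ℕ => j * q) atTop atTop :=
      tendsto_atTop_mono (fun q => Nat.le_mul_of_pos_left q (by omega)) tendsto_id
    have hEntry : Tendsto (fun q : ℕ => ((j * q : ℕ) : ℝ)⁻¹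
        * ∫ ω, Real.log (Ymat A (fun j' => R j' ω) (j * q) ℓ₀ ℓ₀)) atTop (nhds γ) :=
      (hγE ℓ₀ ℓ₀).comp htend
    refine le_of_tendsto hEntry ?_
    rw [Filter.eventually_atTop]
    refine ⟨max 1 n₀, fun q hq => ?_⟩
    have h1q : 1 ≤ q := le_trans (le_max_left _ _) hq
    have hn₀q : n₀ ≤ j * q := le_trans (le_max_right _ _) (hq.trans
      (Nat.le_mul_of_pos_left q (by omega)))
    have key2 : (∫ ω, Real.log (Ymat A (fun j' => R j' ω) (j * q) ℓ₀ ℓ₀))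
        ≤ (q : ℝ) * fj := by
      refine le_trans (entry_integral_le_f hA_nonneg hρ hmeas hposall
        (fun i' k' h => hlog i' k' h) hprim hn₀q ℓ₀ ℓ₀) ?_
      exact f_iter hA_nonneg hρ hmeas hindep hident hposall (fun i' k' h => hlog i' k' h) j q
    have hjpos : (0 : ℝ) < (j : ℝ) := by exact_mod_cast (by omega : 0 < j)
    have hqpos : (0 : ℝ) < (q : ℝ) := by exact_mod_cast (by omega : 0 < q)
    have e : ((j * q : ℕ) : ℝ)⁻¹ * ((q : ℝ) * fj) = (j : ℝ)⁻¹ * fj := by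
      push_cast
      field_simp
    calc ((j * q : ℕ) : ℝ)⁻¹ * ∫ ω, Real.log (Ymat A (fun j' => R j' ω) (j * q) ℓ₀ ℓ₀)
        ≤ ((j * q : ℕ) : ℝ)⁻¹ * ((q : ℝ) * fj) := by
          refine mul_le_mul_of_nonneg_left key2 ?_
          positivity
      _ = (j : ℝ)⁻¹ * fj := e
end

section
/- If a_{11} > 0, then γ ≥ log a_{11} + E[log r_{1,1}]; equivalently, the AA decay rate satisfies ρ^{AA} = −γ ≤ −log a_{11} − E[log r_{1,1}]. In particular, if a_{11} = 1 − δ and −E[log r_{1,1}] ≤ δ for some δ ∈ (0,1), then ρ^{AA} ≤ δ/(1−δ) + δ (the 'inept agent' phenomenon: one highly self-confident agent with small learning ability caps the learning rate of the entire network). -/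
open MeasureTheory ProbabilityTheory Filter Matrix

lemma prod_entry_bound {K : ℕ} (z : Fin K) (B : ℕ → Matrix (Fin K) (Fin K) ℝ)
    (hB : ∀ j ℓ k, 0 ≤ B j ℓ k) (i : ℕ) :
    (∀ ℓ k, 0 ≤ ((List.range i).map B).prod ℓ k) ∧
    (∏ j ∈ Finset.range i, B j z z) ≤ ((List.range i).map B).prod z z := by
  induction i with
  | zero =>
      simp [Matrix.one_apply]
      intro ℓ k
      split <;> norm_num
  | succ i ih =>
      rw [List.range_succ, List.map_append, List.prod_append, List.map_singleton,
        List.prod_singleton]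
      set P := ((List.range i).map B).prod with hP
      constructor
      · intro ℓ k
        rw [Matrix.mul_apply]
        exact Finset.sum_nonneg fun m _ => mul_nonneg (ih.1 ℓ m) (hB i m k)
      · rw [Finset.prod_range_succ, Matrix.mul_apply]
        calc (∏ j ∈ Finset.range i, B j z z) * B i z z
            ≤ P z z * B i z z := mul_le_mul_of_nonneg_right ih.2 (hB i z z)
          _ ≤ ∑ m, P z m * B i m z := by
              apply Finset.single_le_sum (f := fun m => P z m * B i m z)
                (fun m _ => mul_nonneg (ih.1 z m) (hB i m z)) (Finset.mem_univ z)

/-- **The inept agent phenomenon.** If `a₁₁ > 0` then `γ ≥ log a₁₁ + E[log r_{1,1}]`, i.e.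
`ρ^AA = -γ ≤ -log a₁₁ - E[log r_{1,1}]`.  In particular, if `a₁₁ = 1 - δ` and
`-E[log r_{1,1}] ≤ δ` for some `δ ∈ (0,1)`, then `ρ^AA ≤ δ/(1-δ) + δ`. -/
theorem inept_agent_phenomenon
    {K : ℕ} (hK : 0 < K)
    (A : Matrix (Fin K) (Fin K) ℝ)
    (hA_nonneg : ∀ ℓ k, 0 ≤ A ℓ k)
    (hA_stoch : ∀ k, ∑ ℓ, A ℓ k = 1)
    (hA_prim : ∃ n : ℕ, 1 ≤ n ∧ ∀ ℓ k, 0 < (A ^ n) ℓ k)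
    {Ω : Type} [MeasureSpace Ω] [IsProbabilityMeasure (ℙ : Measure Ω)]
    (R : ℕ → Ω → Fin K → ℝ)
    (hmeas : ∀ i, Measurable (R i))
    (hindep : iIndepFun (fun i => R (i + 1)) ℙ)
    (hident : ∀ i : ℕ, IdentDistrib (R (i + 1)) (R 1) ℙ ℙ)
    (hpos : ∀ i k, 1 ≤ i → ∀ᵐ ω, 0 < R i ω k)
    (hmean : ∀ i k, 1 ≤ i → ∫ ω, R i ω k = 1)
    (hint : ∀ i k, 1 ≤ i → Integrable (fun ω => R i ω k))
    (hlog : ∀ i k, 1 ≤ i → Integrable (fun ω => Real.log (R i ω k)))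
    (γ : ℝ)
    (hγ : ∀ ℓ k : Fin K, ∀ᵐ ω, Tendsto
      (fun i : ℕ => (i : ℝ)⁻¹ * Real.log (Ymat A (fun j => R j ω) i ℓ k)) atTop (nhds γ))
    (ha11 : 0 < A ⟨0, hK⟩ ⟨0, hK⟩) :
    (Real.log (A ⟨0, hK⟩ ⟨0, hK⟩) + ∫ ω, Real.log (R 1 ω ⟨0, hK⟩) ≤ γ) ∧
    (∀ δ : ℝ, 0 < δ → δ < 1 →
      A ⟨0, hK⟩ ⟨0, hK⟩ = 1 - δ →
      -∫ ω, Real.log (R 1 ω ⟨0, hK⟩) ≤ δ →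
      -γ ≤ δ / (1 - δ) + δ) := by
  set z : Fin K := ⟨0, hK⟩ with hz
  set μ : ℝ := ∫ ω, Real.log (R 1 ω z) with hμ
  have hmain : Real.log (A z z) + μ ≤ γ := by
    -- SLLN for X i ω = log (R (i+1) ω z)
    set X : ℕ → Ω → ℝ := fun i ω => Real.log (R (i + 1) ω z) with hX
    have hf : Measurable (fun v : Fin K → ℝ => Real.log (v z)) :=
      Real.measurable_log.comp (measurable_pi_apply z)
    have hslln : ∀ᵐ ω, Tendsto (fun n : ℕ => (∑ i ∈ Finset.range n, X i ω) / n)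
        atTop (nhds μ) := by
      have h0 : μ = ∫ ω, X 0 ω := by simp [hX, hμ]
      rw [h0]
      apply strong_law_ae_real X
      · exact hlog 1 z le_rfl
      · intro i j hij
        exact (hindep.indepFun hij).comp hf hf
      · intro i
        exact ((hident i).trans (hident 0).symm).comp hf
    have hposall : ∀ᵐ ω, ∀ j : ℕ, ∀ k, 0 < R (j + 1) ω k := by
      rw [ae_all_iff]
      intro j
      rw [ae_all_iff]
      intro k
      exact hpos (j + 1) k (Nat.le_add_left 1 j)
    obtain ⟨ω, hω1, hω2, hω3⟩ := (hposall.and (hslln.and (hγ z z))).exists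
    -- pointwise bound
    set B : ℕ → Matrix (Fin K) (Fin K) ℝ :=
      fun j => Aᵀ * Matrix.diagonal (R (j + 1) ω) with hB
    have hBentry : ∀ j ℓ k, B j ℓ k = A k ℓ * R (j + 1) ω k := by
      intro j ℓ k
      simp [hB, Matrix.mul_diagonal, Matrix.transpose_apply]
    have hBnn : ∀ j ℓ k, 0 ≤ B j ℓ k := fun j ℓ k => by
      rw [hBentry]; exact mul_nonneg (hA_nonneg k ℓ) (hω1 j k).le
    have hge : ∀ i : ℕ, 1 ≤ i →
        Real.log (A z z) + (∑ j ∈ Finset.range i, X j ω) / i ≤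
          (i : ℝ)⁻¹ * Real.log (Ymat A (fun j => R j ω) i z z) := by
      intro i hi
      have hip : (0:ℝ) < i := by exact_mod_cast hi
      have hfac : ∀ j ∈ Finset.range i, (0:ℝ) < B j z z := by
        intro j _
        rw [hBentry]
        exact mul_pos ha11 (hω1 j z)
      have hprodpos : 0 < ∏ j ∈ Finset.range i, B j z z := Finset.prod_pos hfac
      have hle : ∏ j ∈ Finset.range i, B j z z ≤ Ymat A (fun j => R j ω) i z z :=
        (prod_entry_bound z B hBnn i).2
      have hlog1 : Real.log (∏ j ∈ Finset.range i, B j z z) ≤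
          Real.log (Ymat A (fun j => R j ω) i z z) :=
        Real.log_le_log hprodpos hle
      have hlogprod : Real.log (∏ j ∈ Finset.range i, B j z z) =
          i * Real.log (A z z) + ∑ j ∈ Finset.range i, X j ω := by
        rw [Real.log_prod (fun j hj => (hfac j hj).ne')]
        have : ∀ j ∈ Finset.range i, Real.log (B j z z) = Real.log (A z z) + X j ω := by
          intro j _
          rw [hBentry, Real.log_mul ha11.ne' (hω1 j z).ne']
        rw [Finset.sum_congr rfl this, Finset.sum_add_distrib, Finset.sum_const,
          Finset.card_range, nsmul_eq_mul]
      have heq : Real.log (A z z) + (∑ j ∈ Finset.range i, X j ω) / i =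
          (i : ℝ)⁻¹ * Real.log (∏ j ∈ Finset.range i, B j z z) := by
        rw [hlogprod]; field_simp
      rw [heq]
      exact mul_le_mul_of_nonneg_left hlog1 (inv_nonneg.mpr hip.le)
    have htg : Tendsto (fun i : ℕ => Real.log (A z z) + (∑ j ∈ Finset.range i, X j ω) / i)
        atTop (nhds (Real.log (A z z) + μ)) :=
      tendsto_const_nhds.add hω2
    refine le_of_tendsto_of_tendsto htg hω3 ?_
    filter_upwards [eventually_ge_atTop 1] with i hi using hge i hi
  refine ⟨hmain, ?_⟩
  intro δ hδ0 hδ1 hAδ hE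
  have h1δ : (0:ℝ) < 1 - δ := by linarith
  have hlogb : -Real.log (1 - δ) ≤ δ / (1 - δ) := by
    have := Real.log_le_sub_one_of_pos (inv_pos.mpr h1δ)
    rw [Real.log_inv] at this
    have : -Real.log (1 - δ) ≤ (1 - δ)⁻¹ - 1 := this
    have heq : (1 - δ)⁻¹ - 1 = δ / (1 - δ) := by field_simp; ring
    linarith [heq ▸ this]
  rw [hAδ] at hmain
  linarith
end

section
/- Assume in addition that a_{k1} > 0 for all k and that every row of A is nonzero, so that the first row of Y_i is strictly positive for all i ≥ 1; let u_i denote the probability vector obtained by normalizing the first row of Y_i, i.e., [u_i]_k = [Y_i]_{1k} / Σ_ℓ [Y_i]_{1ℓ}. Then almost surely ρ^{GA} − ρ^{AA} = lim_{i→∞} (1/i) Σ_{j=2}^i [ D(π‖u_{j−1}) − D(π‖A u_{j−1}) ], where D(p‖q) = Σ_k p_k log(p_k/q_k) is the KL divergence between probability vectors. -/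
open MeasureTheory ProbabilityTheory Filter Matrix

/-- KL divergence between two probability vectors, `D(p‖q) = Σ_k p_k log(p_k/q_k)`. -/
noncomputable def klVecReal {K : ℕ} (p q : Fin K → ℝ) : ℝ := ∑ k, p k * Real.log (p k / q k)

/-- The probability vector obtained by normalizing the first row of `Y`. -/
noncomputable def firstRowNormalized {K : ℕ} (hK : 0 < K) (Y : Matrix (Fin K) (Fin K) ℝ)
    (k : Fin K) : ℝ :=
  Y ⟨0, hK⟩ k / ∑ ℓ, Y ⟨0, hK⟩ ℓ

lemma Ymat_succ {K : ℕ} (A : Matrix (Fin K) (Fin K) ℝ) (r : ℕ → Fin K → ℝ) (i : ℕ) :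
    Ymat A r (i + 1) = Ymat A r i * (Aᵀ * Matrix.diagonal (r (i + 1))) := by
  unfold Ymat
  rw [List.range_succ, List.map_append, List.prod_append, List.map_singleton,
    List.prod_singleton]

lemma Ymat_entry_succ {K : ℕ} (A : Matrix (Fin K) (Fin K) ℝ) (r : ℕ → Fin K → ℝ) (i : ℕ)
    (ℓ k : Fin K) :
    Ymat A r (i + 1) ℓ k = (∑ m, Ymat A r i ℓ m * A k m) * r (i + 1) k := by
  rw [Ymat_succ, ← Matrix.mul_assoc, Matrix.mul_diagonal, Matrix.mul_apply]
  simp [Matrix.transpose_apply]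

lemma Ymat_first_row_pos {K : ℕ} (hK : 0 < K) (A : Matrix (Fin K) (Fin K) ℝ)
    (hA_nonneg : ∀ ℓ k, 0 ≤ A ℓ k)
    (hA_col1 : ∀ k, 0 < A k ⟨0, hK⟩)
    (hA_rows : ∀ ℓ, ∃ k, A ℓ k ≠ 0)
    (r : ℕ → Fin K → ℝ) (hr : ∀ j, 1 ≤ j → ∀ k, 0 < r j k) :
    ∀ i, 1 ≤ i → ∀ k, 0 < Ymat A r i ⟨0, hK⟩ k := by
  intro i
  induction i with
  | zero => omega
  | succ n ih =>
    intro _ k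
    rw [Ymat_entry_succ]
    have hrpos := hr (n + 1) (by omega) k
    rcases Nat.eq_zero_or_pos n with hn | hn
    · subst hn
      have h1 : Ymat A r 0 = 1 := by simp [Ymat]
      rw [h1]
      simp only [Matrix.one_apply]
      have : ∑ m, (if (⟨0, hK⟩ : Fin K) = m then (1:ℝ) else 0) * A k m = A k ⟨0, hK⟩ := by
        rw [Finset.sum_eq_single (⟨0, hK⟩ : Fin K)]
        · simp
        · intro b _ hb; simp [Ne.symm hb]
        · simp
      rw [this]
      exact mul_pos (hA_col1 k) hrpos
    · apply mul_pos _ hrpos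
      obtain ⟨m₀, hm₀⟩ := hA_rows k
      have hm₀' : 0 < A k m₀ := lt_of_le_of_ne (hA_nonneg k m₀) (Ne.symm hm₀)
      apply Finset.sum_pos'
      · intro m _
        exact mul_nonneg (ih hn m).le (hA_nonneg k m)
      · exact ⟨m₀, Finset.mem_univ _, mul_pos (ih hn m₀) hm₀'⟩

/-- Deterministic core of the argument: the telescoping identity plus the limit bookkeeping. -/
lemma det_key {K : ℕ} (hK : 0 < K) (A : Matrix (Fin K) (Fin K) ℝ)
    (hA_nonneg : ∀ ℓ k, 0 ≤ A ℓ k)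
    (hA_col1 : ∀ k, 0 < A k ⟨0, hK⟩)
    (hA_rows : ∀ ℓ, ∃ k, A ℓ k ≠ 0)
    (π : Fin K → ℝ) (hπ_pos : ∀ k, 0 < π k) (hπ_sum : ∑ k, π k = 1)
    (r : ℕ → Fin K → ℝ) (hr : ∀ j, 1 ≤ j → ∀ k, 0 < r j k)
    (γ μ : ℝ)
    (hγd : ∀ k, Tendsto (fun i : ℕ => (i : ℝ)⁻¹ *
      Real.log (Ymat A r i ⟨0, hK⟩ k)) atTop (nhds γ))
    (hslln : Tendsto (fun n : ℕ => (∑ j ∈ Finset.range n,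
      ∑ k, π k * Real.log (r (j + 1) k)) / n) atTop (nhds μ)) :
    Tendsto (fun i : ℕ => (i : ℝ)⁻¹ * ∑ j ∈ Finset.Icc 2 i,
        (klVecReal π (firstRowNormalized hK (Ymat A r (j - 1))) -
          klVecReal π (A.mulVec (firstRowNormalized hK (Ymat A r (j - 1))))))
      atTop (nhds (γ - μ)) := by
  haveI : Nonempty (Fin K) := ⟨⟨0, hK⟩⟩
  set e : Fin K := ⟨0, hK⟩ with he
  set v : ℕ → Fin K → ℝ := fun i k => Ymat A r i e k with hv
  have hvpos : ∀ i, 1 ≤ i → ∀ k, 0 < v i k :=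
    Ymat_first_row_pos hK A hA_nonneg hA_col1 hA_rows r hr
  set s : ℕ → ℝ := fun i => ∑ k, v i k with hs
  have hspos : ∀ i, 1 ≤ i → 0 < s i := fun i hi =>
    Finset.sum_pos (fun k _ => hvpos i hi k) Finset.univ_nonempty
  set φ : ℕ → ℝ := fun i => ∑ k, π k * Real.log (v i k) with hφ
  set g : ℕ → ℝ := fun j => ∑ k, π k * Real.log (r j k) with hg
  -- key per-term identity
  have hterm : ∀ m, 1 ≤ m →
      klVecReal π (firstRowNormalized hK (Ymat A r m)) -
        klVecReal π (A.mulVec (firstRowNormalized hK (Ymat A r m))) =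
      φ (m + 1) - φ m - g (m + 1) := by
    intro m hm
    have hu : ∀ k, firstRowNormalized hK (Ymat A r m) k = v m k / s m := fun k => rfl
    have ha : ∀ k, (A.mulVec (firstRowNormalized hK (Ymat A r m))) k
        = (∑ ℓ, v m ℓ * A k ℓ) / s m := by
      intro k
      rw [Matrix.mulVec, dotProduct]
      rw [Finset.sum_div]
      exact Finset.sum_congr rfl fun ℓ _ => by rw [hu ℓ]; ring
    have hapos : ∀ k, 0 < ∑ ℓ, v m ℓ * A k ℓ := by
      intro k
      obtain ⟨ℓ₀, hℓ₀⟩ := hA_rows k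
      exact Finset.sum_pos' (fun ℓ _ => mul_nonneg (hvpos m hm ℓ).le (hA_nonneg k ℓ))
        ⟨ℓ₀, Finset.mem_univ _, mul_pos (hvpos m hm ℓ₀)
          (lt_of_le_of_ne (hA_nonneg k ℓ₀) (Ne.symm hℓ₀))⟩
    have hvsucc : ∀ k, v (m + 1) k = (∑ ℓ, v m ℓ * A k ℓ) * r (m + 1) k := fun k =>
      Ymat_entry_succ A r m e k
    unfold klVecReal
    rw [hφ, hg, ← Finset.sum_sub_distrib, ← Finset.sum_sub_distrib, ← Finset.sum_sub_distrib]
    refine Finset.sum_congr rfl fun k _ => ?_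
    rw [hu k, ha k, hvsucc k]
    have hπk := hπ_pos k
    have hvk := hvpos m hm k
    have hsk := hspos m hm
    have hak := hapos k
    have hrk := hr (m + 1) (by omega) k
    rw [Real.log_div hπk.ne' (div_pos hvk hsk).ne', Real.log_div hvk.ne' hsk.ne',
      Real.log_div hπk.ne' (div_pos hak hsk).ne', Real.log_div hak.ne' hsk.ne',
      Real.log_mul hak.ne' hrk.ne']
    ring
  -- telescoping sum
  have hsum : ∀ i, 1 ≤ i → ∑ j ∈ Finset.Icc 2 i,
      (klVecReal π (firstRowNormalized hK (Ymat A r (j - 1))) -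
        klVecReal π (A.mulVec (firstRowNormalized hK (Ymat A r (j - 1)))))
      = φ i - φ 1 - ∑ j ∈ Finset.Icc 2 i, g j := by
    intro i
    induction i with
    | zero => omega
    | succ n ih =>
      intro _
      rcases Nat.eq_zero_or_pos n with hn | hn
      · subst hn; simp
      · rw [Finset.sum_Icc_succ_top (by omega : 2 ≤ n + 1),
          Finset.sum_Icc_succ_top (by omega : 2 ≤ n + 1), ih hn]
        have : n + 1 - 1 = n := by omega
        rw [this, hterm n hn]
        ring
  -- limits
  have hφlim : Tendsto (fun i : ℕ => (i : ℝ)⁻¹ * φ i) atTop (nhds γ) := by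
    have h1 : Tendsto (fun i : ℕ => ∑ k, π k * ((i : ℝ)⁻¹ * Real.log (v i k))) atTop
        (nhds (∑ k, π k * γ)) :=
      tendsto_finset_sum _ fun k _ => (hγd k).const_mul (π k)
    have h2 : (∑ k, π k * γ) = γ := by rw [← Finset.sum_mul, hπ_sum, one_mul]
    rw [h2] at h1
    convert h1 using 2 with i
    rw [hφ, Finset.mul_sum]
    exact Finset.sum_congr rfl fun k _ => by ring
  have hφ1lim : Tendsto (fun i : ℕ => (i : ℝ)⁻¹ * φ 1) atTop (nhds 0) := by
    have := (tendsto_inv_atTop_nhds_zero_nat (𝕜 := ℝ)).mul_const (φ 1)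
    simpa using this
  have hglim : Tendsto (fun i : ℕ => (i : ℝ)⁻¹ * ∑ j ∈ Finset.Icc 2 i, g j) atTop (nhds μ) := by
    have hid : ∀ i : ℕ, 1 ≤ i →
        ∑ j ∈ Finset.range i, g (j + 1) = g 1 + ∑ j ∈ Finset.Icc 2 i, g j := by
      intro i hi
      have h1 : ∑ j ∈ Finset.range i, g (j + 1) = ∑ j ∈ Finset.Ioc 0 i, g j := by
        rw [← Finset.Icc_add_one_left_eq_Ioc, ← Finset.Ico_add_one_right_eq_Icc, Finset.sum_Ico_eq_sum_range]
        simp [add_comm]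
      have h2 : ∑ j ∈ Finset.Icc 2 i, g j = ∑ j ∈ Finset.Ioc 1 i, g j := by
        rw [← Finset.Icc_add_one_left_eq_Ioc]; rfl
      have h3 : ∑ j ∈ Finset.Ioc 0 1, g j + ∑ j ∈ Finset.Ioc 1 i, g j
          = ∑ j ∈ Finset.Ioc 0 i, g j :=
        Finset.sum_Ioc_consecutive _ (by omega) hi
      have h4 : ∑ j ∈ Finset.Ioc 0 1, g j = g 1 := by
        have : Finset.Ioc 0 1 = {1} := rfl
        rw [this, Finset.sum_singleton]
      rw [h1, h2, ← h3, h4]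
    have hg1 : Tendsto (fun i : ℕ => (i : ℝ)⁻¹ * g 1) atTop (nhds 0) := by
      have := (tendsto_inv_atTop_nhds_zero_nat (𝕜 := ℝ)).mul_const (g 1)
      simpa using this
    have h5 : Tendsto (fun i : ℕ =>
        (∑ j ∈ Finset.range i, g (j + 1)) / i - (i : ℝ)⁻¹ * g 1) atTop (nhds (μ - 0)) :=
      hslln.sub hg1
    rw [sub_zero] at h5
    apply h5.congr'
    filter_upwards [eventually_ge_atTop 1] with i hi
    rw [hid i hi, div_eq_inv_mul]
    ring
  have hfinal := (hφlim.sub hφ1lim).sub hglim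
  rw [sub_zero] at hfinal
  apply hfinal.congr'
  filter_upwards [eventually_ge_atTop 1] with i hi
  rw [hsum i hi]
  ring

/-- **Exact expression for the gap.** Almost surely,
`ρ^GA − ρ^AA = lim_i (1/i) Σ_{j=2}^i [D(π‖u_{j−1}) − D(π‖A u_{j−1})]`, where `u_j` is the
normalized first row of `Y_j`. -/
theorem gap_as_average_of_KL_differences
    {K : ℕ} (hK : 0 < K)
    (A : Matrix (Fin K) (Fin K) ℝ)
    (hA_nonneg : ∀ ℓ k, 0 ≤ A ℓ k)
    (hA_stoch : ∀ k, ∑ ℓ, A ℓ k = 1)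
    (hA_prim : ∃ n : ℕ, 1 ≤ n ∧ ∀ ℓ k, 0 < (A ^ n) ℓ k)
    (hA_col1 : ∀ k, 0 < A k ⟨0, hK⟩)
    (hA_rows : ∀ ℓ, ∃ k, A ℓ k ≠ 0)
    (π : Fin K → ℝ)
    (hπ_pos : ∀ k, 0 < π k)
    (hπ_sum : ∑ k, π k = 1)
    (hπ_eig : A.mulVec π = π)
    {Ω : Type} [MeasureSpace Ω] [IsProbabilityMeasure (ℙ : Measure Ω)]
    (R : ℕ → Ω → Fin K → ℝ)
    (hmeas : ∀ i, Measurable (R i))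
    (hindep : iIndepFun (fun i => R (i + 1)) ℙ)
    (hident : ∀ i : ℕ, IdentDistrib (R (i + 1)) (R 1) ℙ ℙ)
    (hpos : ∀ i k, 1 ≤ i → ∀ᵐ ω, 0 < R i ω k)
    (hmean : ∀ i k, 1 ≤ i → ∫ ω, R i ω k = 1)
    (hint : ∀ i k, 1 ≤ i → Integrable (fun ω => R i ω k))
    (hlog : ∀ i k, 1 ≤ i → Integrable (fun ω => Real.log (R i ω k)))
    (γ : ℝ)
    (hγ : ∀ ℓ k : Fin K, ∀ᵐ ω, Tendsto
      (fun i : ℕ => (i : ℝ)⁻¹ * Real.log (Ymat A (fun j => R j ω) i ℓ k)) atTop (nhds γ)) :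
    ∀ᵐ ω, Tendsto
      (fun i : ℕ => (i : ℝ)⁻¹ * ∑ j ∈ Finset.Icc 2 i,
        (klVecReal π (firstRowNormalized hK (Ymat A (fun m => R m ω) (j - 1))) -
          klVecReal π (A.mulVec (firstRowNormalized hK (Ymat A (fun m => R m ω) (j - 1))))))
      atTop
      (nhds ((-∑ k, π k * ∫ ω, Real.log (R 1 ω k)) - (-γ))) := by
  -- the strong law of large numbers for `ω ↦ Σ_k π_k log R_j(ω)_k`
  have hslln : ∀ᵐ ω, Tendsto (fun n : ℕ => (∑ j ∈ Finset.range n,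
      ∑ k, π k * Real.log (R (j + 1) ω k)) / n) atTop
      (nhds (∑ k, π k * ∫ ω, Real.log (R 1 ω k))) := by
    set f : (Fin K → ℝ) → ℝ := fun x => ∑ k, π k * Real.log (x k) with hf
    have hfm : Measurable f :=
      Finset.measurable_sum _ fun k _ =>
        (Real.measurable_log.comp (measurable_pi_apply k)).const_mul (π k)
    set X : ℕ → Ω → ℝ := fun j ω => f (R (j + 1) ω) with hX
    have hint0 : Integrable (X 0) := by
      apply integrable_finset_sum
      intro k _
      exact ((hlog 1 k le_rfl).const_mul (π k))
    have hpair : Pairwise (Function.onFun (IndepFun · · (ℙ : Measure Ω)) X) := fun i j hij =>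
      (hindep.indepFun hij).comp hfm hfm
    have hid : ∀ i, IdentDistrib (X i) (X 0) ℙ ℙ := fun i => (hident i).comp hfm
    have hmean0 : ∫ ω, X 0 ω = ∑ k, π k * ∫ ω, Real.log (R 1 ω k) := by
      rw [hX]
      simp only [hf]
      rw [integral_finset_sum _ fun k _ => (hlog 1 k le_rfl).const_mul (π k)]
      exact Finset.sum_congr rfl fun k _ => integral_const_mul _ _
    have := strong_law_ae_real X hint0 hpair hid
    rw [hmean0] at this
    exact this
  -- the a.s. positivity event
  have hposall : ∀ᵐ ω, ∀ (i : ℕ) (k : Fin K), 1 ≤ i → 0 < R i ω k := by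
    rw [ae_all_iff]
    intro i
    rw [ae_all_iff]
    intro k
    by_cases hi : 1 ≤ i
    · exact (hpos i k hi).mono fun ω h _ => h
    · exact Eventually.of_forall fun ω h => absurd h hi
  -- the a.s. Lyapunov-limit event for the first row
  have hγall : ∀ᵐ ω, ∀ k : Fin K, Tendsto
      (fun i : ℕ => (i : ℝ)⁻¹ * Real.log (Ymat A (fun j => R j ω) i ⟨0, hK⟩ k))
      atTop (nhds γ) := by
    rw [ae_all_iff]
    intro k
    exact hγ ⟨0, hK⟩ k
  have hconst : (-∑ k, π k * ∫ ω, Real.log (R 1 ω k)) - (-γ)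
      = γ - ∑ k, π k * ∫ ω, Real.log (R 1 ω k) := by ring
  rw [hconst]
  filter_upwards [hslln, hposall, hγall] with ω hω1 hω2 hω3
  exact det_key hK A hA_nonneg hA_col1 hA_rows π hπ_pos hπ_sum
    (fun j => R j ω) (fun j hj k => hω2 j k hj) γ _ hω3 hω1
end

section
/- Any minimizer of F over the probability simplex has strictly positive entries and satisfies the stationarity (KKT) conditions π_k / v_k = E[ r_k / (Σ_ℓ r_ℓ v_ℓ) ] for every k = 1,…,K. (Here F(v) = +∞ whenever some entry v_k = 0, since all entries of π are strictly positive, so the infimum is not approached at the boundary of the simplex.) -/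
open MeasureTheory ProbabilityTheory

/-- The functional `F(v) = Σ_k π_k log(π_k/v_k) + E[log(Σ_k v_k r_k)] + ρ^GA` (with
`ρ^GA = −Σ_k π_k E[log r_k]`), extended to the whole simplex with value `+∞` whenever some
entry `v_k = 0` (or negative). -/
noncomputable def Fext {K : ℕ} {Ω : Type} [MeasureSpace Ω]
    (π : Fin K → ℝ) (r : Ω → Fin K → ℝ) (v : Fin K → ℝ) : EReal :=
  if ∀ k, 0 < v k then
    ((((∑ k, π k * Real.log (π k / v k)) + (∫ ω, Real.log (∑ k, v k * r ω k)) +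
      -∑ k, π k * ∫ ω, Real.log (r ω k)) : ℝ) : EReal)
  else ⊤

set_option maxHeartbeats 1000000

/-- **Optimality (KKT) conditions.** Any minimizer of `F` over the probability simplex has
strictly positive entries and satisfies `π_k / v_k = E[r_k / (Σ_ℓ r_ℓ v_ℓ)]` for every `k`. -/
theorem KKT_conditions_of_minimizer
    {K : ℕ} (hK : 0 < K)
    (π : Fin K → ℝ)
    (hπ_pos : ∀ k, 0 < π k)
    (hπ_sum : ∑ k, π k = 1)
    {Ω : Type} [MeasureSpace Ω] [IsProbabilityMeasure (ℙ : Measure Ω)]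
    (r : Ω → Fin K → ℝ)
    (hmeas : Measurable r)
    (hpos : ∀ k, ∀ᵐ ω, 0 < r ω k)
    (hmean : ∀ k, ∫ ω, r ω k = 1)
    (hint : ∀ k, Integrable (fun ω => r ω k))
    (hlog : ∀ k, Integrable (fun ω => Real.log (r ω k)))
    (v : Fin K → ℝ)
    (hv_nonneg : ∀ k, 0 ≤ v k)
    (hv_sum : ∑ k, v k = 1)
    (hv_min : ∀ w : Fin K → ℝ, (∀ k, 0 ≤ w k) → ∑ k, w k = 1 → Fext π r v ≤ Fext π r w) :
    (∀ k, 0 < v k) ∧ ∀ k, π k / v k = ∫ ω, r ω k / ∑ ℓ, r ω ℓ * v ℓ := by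
  classical
  -- Step 1: strict positivity of the minimizer
  have hv_pos : ∀ k, 0 < v k := by
    by_contra hcon
    have h1 : Fext π r v = ⊤ := by simp only [Fext]; rw [if_neg hcon]
    have h2 := hv_min π (fun k => (hπ_pos k).le) hπ_sum
    rw [h1] at h2
    have h3 : Fext π r π ≠ ⊤ := by
      simp only [Fext]; rw [if_pos hπ_pos]; exact EReal.coe_ne_top _
    exact h3 (top_le_iff.mp h2)
  refine ⟨hv_pos, fun k => ?_⟩
  have hvk : 0 < v k := hv_pos k
  have hv_le : ∀ ℓ, v ℓ ≤ 1 := by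
    intro ℓ
    have := Finset.single_le_sum (f := v) (fun j _ => hv_nonneg j) (Finset.mem_univ ℓ)
    rw [hv_sum] at this; exact this
  set d : Fin K → ℝ := fun ℓ => (if ℓ = k then 1 else 0) - v ℓ with hd
  set S : Ω → ℝ := fun ω => ∑ ℓ, v ℓ * r ω ℓ with hS
  set c : Ω → ℝ := fun ω => ∑ ℓ, d ℓ * r ω ℓ with hc
  have hd_sum : ∑ ℓ, d ℓ = 0 := by
    simp [hd, Finset.sum_sub_distrib, hv_sum]
  have hc_eq : ∀ ω, c ω = r ω k - S ω := by
    intro ω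
    simp [hc, hd, hS, sub_mul, Finset.sum_sub_distrib, ite_mul]
  have hsum : ∀ (t : ℝ) (ω : Ω), ∑ ℓ, (v ℓ + t * d ℓ) * r ω ℓ = S ω + t * c ω := by
    intro t ω
    simp [hS, hc, add_mul, Finset.sum_add_distrib, Finset.mul_sum, mul_assoc]
  -- measurability
  have hrm : ∀ ℓ, Measurable (fun ω => r ω ℓ) := fun ℓ => (measurable_pi_apply ℓ).comp hmeas
  have hSm : Measurable S := Finset.univ.measurable_sum (fun ℓ _ => (hrm ℓ).const_mul (v ℓ))
  have hcm : Measurable c := Finset.univ.measurable_sum (fun ℓ _ => (hrm ℓ).const_mul (d ℓ))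
  have hr_pos : ∀ᵐ ω, ∀ ℓ, 0 < r ω ℓ := ae_all_iff.mpr hpos
  have hae : ∀ᵐ ω, 0 < S ω ∧ v k * r ω k ≤ S ω ∧ |c ω| ≤ (1 + 1 / v k) * S ω := by
    filter_upwards [hr_pos] with ω hω
    have hSpos : 0 < S ω :=
      Finset.sum_pos (fun ℓ _ => mul_pos (hv_pos ℓ) (hω ℓ)) ⟨k, Finset.mem_univ k⟩
    have hle : v k * r ω k ≤ S ω :=
      Finset.single_le_sum (fun ℓ _ => (mul_pos (hv_pos ℓ) (hω ℓ)).le) (Finset.mem_univ k)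
    refine ⟨hSpos, hle, ?_⟩
    rw [hc_eq]
    have h1 : r ω k ≤ 1 / v k * S ω := by
      rw [one_div, inv_mul_eq_div, le_div_iff₀ hvk]; nlinarith
    have h1vk : 0 < 1 / v k := one_div_pos.mpr hvk
    have h2 : 0 ≤ 1 / v k * S ω := by positivity
    rw [abs_le]
    constructor
    · nlinarith [(hω k)]
    · nlinarith [(hω k)]
  set ε : ℝ := v k / (2 * (v k + 1)) with hε_def
  have hε : 0 < ε := div_pos hvk (by nlinarith)
  have hvk1 : v k + 1 ≠ 0 := by nlinarith
  have hεh : ε * (1 + 1 / v k) = 1 / 2 := by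
    rw [hε_def]
    field_simp
  have hε_half : ε < 1 / 2 := by
    rw [hε_def, div_lt_div_iff₀ (by nlinarith) (by norm_num)]
    nlinarith
  have hε_vk : ε ≤ v k / 2 := by
    rw [hε_def, div_le_div_iff₀ (by nlinarith) (by norm_num)]
    nlinarith
  -- denominator bound
  have hden : ∀ᵐ ω, ∀ t ∈ Metric.ball (0 : ℝ) ε, S ω / 2 ≤ S ω + t * c ω := by
    filter_upwards [hae] with ω hω
    obtain ⟨hSpos, -, hcb⟩ := hω
    intro t ht
    have habs : |t| ≤ ε := by
      have := Metric.mem_ball.mp ht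
      rw [Real.dist_eq, sub_zero] at this
      exact this.le
    have h1 : |t * c ω| ≤ ε * ((1 + 1 / v k) * S ω) := by
      rw [abs_mul]
      exact mul_le_mul habs hcb (abs_nonneg _) hε.le
    have h2 : ε * ((1 + 1 / v k) * S ω) = S ω / 2 := by
      rw [← mul_assoc, hεh]; ring
    nlinarith [neg_abs_le (t * c ω)]
  -- integrability of S and of log S
  have hS_int : Integrable S := integrable_finset_sum _ (fun ℓ _ => (hint ℓ).const_mul (v ℓ))
  have hlogS_int : Integrable (fun ω => Real.log (S ω)) := by
    set k₀ : Fin K := ⟨0, hK⟩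
    have hg : Integrable (fun ω => S ω + (|Real.log (v k₀)| + |Real.log (r ω k₀)|)) :=
      hS_int.add ((integrable_const _).add (hlog k₀).abs)
    refine Integrable.mono' hg ((Real.measurable_log.comp hSm).aestronglyMeasurable) ?_
    filter_upwards [hr_pos] with ω hω
    have hSpos : 0 < S ω :=
      Finset.sum_pos (fun ℓ _ => mul_pos (hv_pos ℓ) (hω ℓ)) ⟨k, Finset.mem_univ k⟩
    have hle : v k₀ * r ω k₀ ≤ S ω :=
      Finset.single_le_sum (fun ℓ _ => (mul_pos (hv_pos ℓ) (hω ℓ)).le) (Finset.mem_univ k₀)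
    rw [Real.norm_eq_abs, abs_le]
    constructor
    · have h1 : Real.log (v k₀ * r ω k₀) ≤ Real.log (S ω) :=
        Real.log_le_log (mul_pos (hv_pos k₀) (hω k₀)) hle
      rw [Real.log_mul (hv_pos k₀).ne' (hω k₀).ne'] at h1
      have h2 := neg_abs_le (Real.log (v k₀))
      have h3 := neg_abs_le (Real.log (r ω k₀))
      linarith
    · have h1 := Real.log_le_sub_one_of_pos hSpos
      have h2 := abs_nonneg (Real.log (v k₀))
      have h3 := abs_nonneg (Real.log (r ω k₀))
      linarith
  -- the parametric integral derivative
  have key := hasDerivAt_integral_of_dominated_loc_of_deriv_le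
    (μ := (ℙ : Measure Ω)) (x₀ := (0 : ℝ))
    (F := fun t ω => Real.log (S ω + t * c ω))
    (F' := fun t ω => c ω / (S ω + t * c ω))
    (bound := fun _ => 2 * (1 + 1 / v k)) (s := Metric.ball (0 : ℝ) ε) (Metric.ball_mem_nhds 0 hε)
    (by
      filter_upwards with t
      exact ((Real.measurable_log.comp (hSm.add (hcm.const_mul t))).aestronglyMeasurable))
    (by simpa using hlogS_int)
    (by
      exact ((hcm.div (hSm.add (hcm.const_mul (0 : ℝ)))).aestronglyMeasurable))
    (by
      filter_upwards [hden, hae] with ω hω₁ hω₂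
      obtain ⟨hSpos, -, hcb⟩ := hω₂
      intro t ht
      have hd2 := hω₁ t ht
      have hdpos : 0 < S ω + t * c ω := lt_of_lt_of_le (by linarith) hd2
      rw [Real.norm_eq_abs, abs_div, abs_of_pos hdpos, div_le_iff₀ hdpos]
      have h1vk : 0 < 1 / v k := one_div_pos.mpr hvk
      have h2 : (1 + 1 / v k) * (S ω / 2) ≤ (1 + 1 / v k) * (S ω + t * c ω) :=
        mul_le_mul_of_nonneg_left hd2 (by linarith)
      nlinarith
    )
    (integrable_const _)
    (by
      filter_upwards [hden, hae] with ω hω₁ hω₂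
      obtain ⟨hSpos, -, -⟩ := hω₂
      intro t ht
      have hd2 := hω₁ t ht
      have hdpos : 0 < S ω + t * c ω := lt_of_lt_of_le (by linarith) hd2
      have h1 : HasDerivAt (fun s : ℝ => S ω + s * c ω) (c ω) t := by
        simpa using ((hasDerivAt_id t).mul_const (c ω)).const_add (S ω)
      exact h1.log hdpos.ne'
    )
  obtain ⟨hF'0_int, hB_deriv⟩ := key
  have hcS_int : Integrable (fun ω => c ω / S ω) := by simpa using hF'0_int
  have hB : HasDerivAt (fun t : ℝ => ∫ ω, Real.log (S ω + t * c ω)) (∫ ω, c ω / S ω) 0 := by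
    simpa using hB_deriv
  -- derivative of the entropy part
  have hA : HasDerivAt (fun t : ℝ => ∑ ℓ, π ℓ * Real.log (π ℓ / (v ℓ + t * d ℓ)))
      (∑ ℓ, -(π ℓ * d ℓ / v ℓ)) 0 := by
    apply HasDerivAt.fun_sum
    intro ℓ _
    have h1 : HasDerivAt (fun t : ℝ => v ℓ + t * d ℓ) (d ℓ) 0 := by
      simpa using ((hasDerivAt_id (0 : ℝ)).mul_const (d ℓ)).const_add (v ℓ)
    have hne : v ℓ + 0 * d ℓ ≠ 0 := by simp [(hv_pos ℓ).ne']
    have h2 := ((hasDerivAt_const (0 : ℝ) (π ℓ)).fun_div h1 hne)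
    have hne2 : π ℓ / (v ℓ + 0 * d ℓ) ≠ 0 := by
      simp only [zero_mul, add_zero]
      exact div_ne_zero (hπ_pos ℓ).ne' (hv_pos ℓ).ne'
    have h3 := (h2.log hne2).const_mul (π ℓ)
    convert h3 using 1
    · rfl
    simp only [zero_mul, add_zero]
    field_simp [(hv_pos ℓ).ne', (hπ_pos ℓ).ne']
    ring
  -- local minimality
  have hlocmin : IsLocalMin
      (fun t : ℝ => (∑ ℓ, π ℓ * Real.log (π ℓ / (v ℓ + t * d ℓ)))
        + ∫ ω, Real.log (S ω + t * c ω)) 0 := by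
    refine Filter.eventually_of_mem (Metric.ball_mem_nhds 0 hε) ?_
    intro t ht
    have habs : |t| < ε := by
      have := Metric.mem_ball.mp ht
      rwa [Real.dist_eq, sub_zero] at this
    have hw_pos : ∀ ℓ, 0 < v ℓ + t * d ℓ := by
      intro ℓ
      by_cases hℓ : ℓ = k
      · subst hℓ
        simp only [hd, if_true]
        have h1 : |t * (1 - v ℓ)| ≤ ε := by
          rw [abs_mul]
          have : |1 - v ℓ| ≤ 1 := by
            rw [abs_le]; constructor <;> nlinarith [hv_pos ℓ, hv_le ℓ]
          nlinarith [abs_nonneg t, habs.le]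
        have := neg_abs_le (t * (1 - v ℓ))
        nlinarith [hv_pos ℓ, hε_vk]
      · simp only [hd, if_neg hℓ]
        have := neg_abs_le (t * (0 - v ℓ))
        have h1 : |t * (0 - v ℓ)| ≤ ε * v ℓ := by
          rw [abs_mul]
          have : |0 - v ℓ| = v ℓ := by rw [abs_of_nonpos (by linarith [hv_pos ℓ])]; ring
          rw [this]
          exact mul_le_mul_of_nonneg_right habs.le (hv_nonneg ℓ)
        nlinarith [hv_pos ℓ, hε_half]
    have hw_sum : ∑ ℓ, (v ℓ + t * d ℓ) = 1 := by
      rw [Finset.sum_add_distrib, hv_sum, ← Finset.mul_sum, hd_sum]; ring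
    have h2 := hv_min (fun ℓ => v ℓ + t * d ℓ) (fun ℓ => (hw_pos ℓ).le) hw_sum
    simp only [Fext] at h2
    rw [if_pos hv_pos, if_pos hw_pos, EReal.coe_le_coe_iff] at h2
    have hI1 : (∫ ω, Real.log (∑ ℓ, (v ℓ + t * d ℓ) * r ω ℓ))
        = ∫ ω, Real.log (S ω + t * c ω) := by
      simp only [hsum]
    have hI0 : (∫ ω, Real.log (∑ ℓ, v ℓ * r ω ℓ)) = ∫ ω, Real.log (S ω + 0 * c ω) := by
      simp only [zero_mul, add_zero]
      rfl
    rw [hI1, hI0] at h2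
    simp only [zero_mul, add_zero, mul_zero]
    simpa using h2
  have hD := hlocmin.hasDerivAt_eq_zero (hA.add hB)
  -- evaluate the entropy derivative
  have hAval : (∑ ℓ, -(π ℓ * d ℓ / v ℓ)) = 1 - π k / v k := by
    have hterm : ∀ ℓ, -(π ℓ * d ℓ / v ℓ) = π ℓ - (if ℓ = k then π k / v k else 0) := by
      intro ℓ
      by_cases hℓ : ℓ = k
      · subst hℓ
        simp only [hd, if_true]
        field_simp [(hv_pos ℓ).ne']
        ring
      · simp only [hd, if_neg hℓ]
        field_simp [(hv_pos ℓ).ne']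
        ring
    rw [Finset.sum_congr rfl (fun ℓ _ => hterm ℓ), Finset.sum_sub_distrib, hπ_sum]
    simp
  rw [hAval] at hD
  -- rewrite the goal integral
  have hae2 : (fun ω => r ω k / ∑ ℓ, r ω ℓ * v ℓ) =ᵐ[(ℙ : Measure Ω)]
      fun ω => c ω / S ω + 1 := by
    filter_upwards [hr_pos] with ω hω
    have hSpos : 0 < S ω :=
      Finset.sum_pos (fun ℓ _ => mul_pos (hv_pos ℓ) (hω ℓ)) ⟨k, Finset.mem_univ k⟩
    have hS' : (∑ ℓ, r ω ℓ * v ℓ) = S ω := by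
      simp [hS, mul_comm]
    rw [hS', hc_eq, sub_div, div_self hSpos.ne']
    ring
  have hIgoal : (∫ ω, r ω k / ∑ ℓ, r ω ℓ * v ℓ) = (∫ ω, c ω / S ω) + 1 := by
    rw [integral_congr_ae hae2, integral_add hcS_int (integrable_const 1)]
    simp
  rw [hIgoal]
  linarith
end

section
/- If A = π𝟙ᵀ is rank one with all entries of π strictly positive, then the arithmetic-averaging decay rate has the closed form ρ^{AA} = −γ = −E[ log( Σ_k π_k r_{k,1} ) ]; equivalently, γ = E[log(Σ_k π_k r_{k,1})]. -/
set_option maxHeartbeats 1000000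

open MeasureTheory ProbabilityTheory Filter Matrix

lemma Ymat_rank_one {K : ℕ} (π : Fin K → ℝ) (r : ℕ → Fin K → ℝ) (i : ℕ) (ℓ k : Fin K) :
    Ymat (Matrix.of fun ℓ' _ => π ℓ') r (i+1) ℓ k
      = (∏ j ∈ Finset.range i, ∑ m, π m * r (j+1) m) * (π k * r (i+1) k) := by
  induction i generalizing k with
  | zero =>
      simp [Ymat, List.range_succ, Matrix.mul_diagonal, Matrix.transpose_apply]
  | succ n ih =>
      have : Ymat (Matrix.of fun ℓ' _ => π ℓ') r (n+2)
          = Ymat (Matrix.of fun ℓ' _ => π ℓ') r (n+1) *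
            ((Matrix.of fun ℓ' _ => π ℓ')ᵀ * Matrix.diagonal (r (n+2))) := by
        simp [Ymat, List.range_succ, mul_assoc]
      rw [this, Matrix.mul_apply]
      have h2 : ∀ m : Fin K, ((Matrix.of fun ℓ' _ => π ℓ')ᵀ * Matrix.diagonal (r (n+2))) m k
          = π k * r (n+2) k := by
        intro m; simp [Matrix.mul_diagonal, Matrix.transpose_apply]
      simp only [ih, h2, Finset.prod_range_succ]
      rw [← Finset.sum_mul]
      rw [← Finset.mul_sum]

/-- **Exact rate under rank-one topologies.** If `A = π𝟙ᵀ` with `π > 0`, then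
`ρ^AA = −γ = −E[log(Σ_k π_k r_{k,1})]`, i.e. `γ = E[log(Σ_k π_k r_{k,1})]`. -/
theorem exact_rate_rank_one
    {K : ℕ} (hK : 0 < K)
    (π : Fin K → ℝ)
    (hπ_pos : ∀ k, 0 < π k)
    (hπ_sum : ∑ k, π k = 1)
    {Ω : Type} [MeasureSpace Ω] [IsProbabilityMeasure (ℙ : Measure Ω)]
    (R : ℕ → Ω → Fin K → ℝ)
    (hmeas : ∀ i, Measurable (R i))
    (hindep : iIndepFun (fun i => R (i + 1)) ℙ)
    (hident : ∀ i : ℕ, IdentDistrib (R (i + 1)) (R 1) ℙ ℙ)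
    (hpos : ∀ i k, 1 ≤ i → ∀ᵐ ω, 0 < R i ω k)
    (hmean : ∀ i k, 1 ≤ i → ∫ ω, R i ω k = 1)
    (hint : ∀ i k, 1 ≤ i → Integrable (fun ω => R i ω k))
    (hlog : ∀ i k, 1 ≤ i → Integrable (fun ω => Real.log (R i ω k)))
    (γ : ℝ)
    (hγ : ∀ ℓ k : Fin K, ∀ᵐ ω, Tendsto
      (fun i : ℕ => (i : ℝ)⁻¹ *
        Real.log (Ymat (Matrix.of fun ℓ' _ => π ℓ') (fun j => R j ω) i ℓ k))
      atTop (nhds γ)) :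
    γ = ∫ ω, Real.log (∑ k, π k * R 1 ω k) := by
  classical
  haveI : Nonempty (Fin K) := ⟨⟨0, hK⟩⟩
  set k0 : Fin K := ⟨0, hK⟩ with hk0
  -- the i.i.d. sequence of log-sums
  set X : ℕ → Ω → ℝ := fun j ω => Real.log (∑ m, π m * R (j+1) ω m) with hX
  have hf : Measurable (fun g : Fin K → ℝ => Real.log (∑ m, π m * g m)) := by
    apply Real.measurable_log.comp
    fun_prop
  have hXeq : ∀ j, X j = (fun g : Fin K → ℝ => Real.log (∑ m, π m * g m)) ∘ (R (j+1)) :=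
    fun j => rfl
  have hXmeas : ∀ j, Measurable (X j) := fun j => hf.comp (hmeas (j+1))
  have hXindep : Pairwise (Function.onFun (fun a b => IndepFun a b ℙ) X) := by
    intro i j hij
    have := (hindep.indepFun hij).comp hf hf
    exact this
  have hXident : ∀ i, IdentDistrib (X i) (X 0) ℙ ℙ := by
    intro i
    rw [hXeq i, hXeq 0]
    exact ((hident i).trans (hident 0).symm).comp hf
  -- integrability of X 0
  have hXint : Integrable (X 0) := by
    have hb : Integrable (fun ω => (∑ m, π m * R 1 ω m) +
        (|Real.log (π k0)| + |Real.log (R 1 ω k0)|)) := by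
      refine (integrable_finset_sum _ fun m _ => ((hint 1 m le_rfl).const_mul (π m))).add
        ((integrable_const _).add (hlog 1 k0 le_rfl).abs)
    have hae : ∀ᵐ ω, ∀ k, 0 < R 1 ω k := ae_all_iff.2 fun k => hpos 1 k le_rfl
    refine Integrable.mono' hb (hXmeas 0).aestronglyMeasurable ?_
    filter_upwards [hae] with ω hω
    have hterm : ∀ m, 0 < π m * R 1 ω m := fun m => mul_pos (hπ_pos m) (hω m)
    have hS_pos : 0 < ∑ m, π m * R 1 ω m :=
      Finset.sum_pos (fun m _ => hterm m) Finset.univ_nonempty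
    have hSk : π k0 * R 1 ω k0 ≤ ∑ m, π m * R 1 ω m :=
      Finset.single_le_sum (fun m _ => (hterm m).le) (Finset.mem_univ k0)
    have h01 : X 0 ω = Real.log (∑ m, π m * R 1 ω m) := rfl
    rw [Real.norm_eq_abs, h01, abs_le]
    constructor
    · have h1 : Real.log (π k0 * R 1 ω k0) ≤ Real.log (∑ m, π m * R 1 ω m) :=
        Real.log_le_log (hterm k0) hSk
      rw [Real.log_mul (hπ_pos k0).ne' (hω k0).ne'] at h1
      have h2 : -(|Real.log (π k0)| + |Real.log (R 1 ω k0)|)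
          ≤ Real.log (π k0) + Real.log (R 1 ω k0) := by
        have := abs_le.1 (le_refl |Real.log (π k0)|)
        nlinarith [neg_abs_le (Real.log (π k0)), neg_abs_le (Real.log (R 1 ω k0))]
      linarith
    · have h3 : Real.log (∑ m, π m * R 1 ω m) ≤ (∑ m, π m * R 1 ω m) - 1 :=
        Real.log_le_sub_one_of_pos hS_pos
      have h4 : 0 ≤ |Real.log (π k0)| + |Real.log (R 1 ω k0)| := by positivity
      linarith
  -- SLLN
  have hSLLN := strong_law_ae_real X hXint hXindep hXident
  -- positivity, a.s.
  have hposall : ∀ᵐ ω, ∀ j k, 0 < R (j+1) ω k :=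
    ae_all_iff.2 fun j => ae_all_iff.2 fun k => hpos (j+1) k (Nat.le_add_left 1 j)
  have hγall : ∀ᵐ ω, ∀ k, Tendsto
      (fun i : ℕ => (i : ℝ)⁻¹ *
        Real.log (Ymat (Matrix.of fun ℓ' _ => π ℓ') (fun j => R j ω) i k0 k))
      atTop (nhds γ) := ae_all_iff.2 fun k => hγ k0 k
  obtain ⟨ω, hωpos, hωγ, hωS⟩ := (hposall.and (hγall.and hSLLN)).exists
  -- now pure analysis at this ω
  set r : ℕ → Fin K → ℝ := fun j => R j ω with hr
  set T : ℕ → ℝ := fun n => ∑ i ∈ Finset.range n, X i ω with hT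
  have hterm : ∀ j k, 0 < π k * r (j+1) k := fun j k => mul_pos (hπ_pos k) (hωpos j k)
  have hS_pos : ∀ j, 0 < ∑ m, π m * r (j+1) m :=
    fun j => Finset.sum_pos (fun m _ => hterm j m) Finset.univ_nonempty
  -- log of the matrix entry
  have hlogY : ∀ i k, Real.log (Ymat (Matrix.of fun ℓ' _ => π ℓ') r (i+1) k0 k)
      = T i + (Real.log (π k) + Real.log (r (i+1) k)) := by
    intro i k
    rw [Ymat_rank_one]
    rw [Real.log_mul (Finset.prod_pos fun j _ => hS_pos j).ne' (mul_pos (hπ_pos k) (hωpos i k)).ne']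
    rw [Real.log_mul (hπ_pos k).ne' (hωpos i k).ne']
    congr 1
    rw [Real.log_prod (fun j _ => (hS_pos j).ne')]
  -- T (i+1) sandwiched between entries
  have hlow : ∀ i : ℕ, Real.log (Ymat (Matrix.of fun ℓ' _ => π ℓ') r (i+1) k0 k0) ≤ T (i+1) := by
    intro i
    rw [hlogY, hT]
    simp only [Finset.sum_range_succ]
    have : Real.log (π k0) + Real.log (r (i+1) k0) ≤ X i ω := by
      rw [← Real.log_mul (hπ_pos k0).ne' (hωpos i k0).ne']
      exact Real.log_le_log (hterm i k0)
        (Finset.single_le_sum (fun m _ => (hterm i m).le) (Finset.mem_univ k0))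
    linarith
  have hup : ∀ i : ℕ, ∃ k : Fin K,
      T (i+1) ≤ Real.log K + Real.log (Ymat (Matrix.of fun ℓ' _ => π ℓ') r (i+1) k0 k) := by
    intro i
    obtain ⟨k', -, hk'⟩ := Finset.exists_max_image Finset.univ
      (fun k => π k * r (i+1) k) Finset.univ_nonempty
    refine ⟨k', ?_⟩
    rw [hlogY, hT]
    simp only [Finset.sum_range_succ]
    have hXi : X i ω ≤ Real.log K + (Real.log (π k') + Real.log (r (i+1) k')) := by
      have h1 : (∑ m, π m * r (i+1) m) ≤ (K : ℝ) * (π k' * r (i+1) k') := by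
        calc (∑ m, π m * r (i+1) m) ≤ ∑ _m : Fin K, π k' * r (i+1) k' :=
              Finset.sum_le_sum fun m _ => hk' m (Finset.mem_univ m)
          _ = (K : ℝ) * (π k' * r (i+1) k') := by
              simp [Finset.sum_const, nsmul_eq_mul]
      have h2 : X i ω ≤ Real.log ((K : ℝ) * (π k' * r (i+1) k')) :=
        Real.log_le_log (hS_pos i) h1
      rwa [Real.log_mul (by positivity) (hterm i k').ne',
        Real.log_mul (hπ_pos k').ne' (hωpos i k').ne'] at h2
    linarith
  -- limits
  have hγk : ∀ k : Fin K, Tendsto (fun i : ℕ => ((i+1 : ℕ) : ℝ)⁻¹ *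
      Real.log (Ymat (Matrix.of fun ℓ' _ => π ℓ') r (i+1) k0 k)) atTop (nhds γ) :=
    fun k => (hωγ k).comp (tendsto_add_atTop_nat 1)
  have hTlim : Tendsto (fun i : ℕ => T (i+1) / ((i+1 : ℕ) : ℝ)) atTop (nhds γ) := by
    have hUlim : Tendsto (fun i : ℕ => Real.log K * ((i+1 : ℕ) : ℝ)⁻¹ + γ +
        ∑ k : Fin K, |((i+1 : ℕ) : ℝ)⁻¹ *
          Real.log (Ymat (Matrix.of fun ℓ' _ => π ℓ') r (i+1) k0 k) - γ|) atTop
        (nhds (Real.log K * 0 + γ + ∑ _k : Fin K, |γ - γ|)) := by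
      refine Tendsto.add (Tendsto.add (Tendsto.const_mul _ ?_) tendsto_const_nhds) ?_
      · exact (tendsto_natCast_atTop_atTop.comp (tendsto_add_atTop_nat 1)).inv_tendsto_atTop
      · exact tendsto_finset_sum _ fun k _ => (((hγk k).sub_const γ).abs)
    rw [show Real.log K * 0 + γ + ∑ _k : Fin K, |γ - γ| = γ by simp] at hUlim
    refine tendsto_of_tendsto_of_tendsto_of_le_of_le (hγk k0) hUlim ?_ ?_
    · intro i
      have := hlow i
      have hpos' : (0:ℝ) < ((i+1 : ℕ) : ℝ) := by positivity
      dsimp only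
      rw [div_eq_inv_mul]
      exact mul_le_mul_of_nonneg_left this (by positivity)
    · intro i
      obtain ⟨k', hk'⟩ := hup i
      have hpos' : (0:ℝ) < ((i+1 : ℕ) : ℝ) := by positivity
      dsimp only
      have h1 : T (i+1) / ((i+1 : ℕ) : ℝ) ≤ Real.log K * ((i+1 : ℕ) : ℝ)⁻¹ +
          ((i+1 : ℕ) : ℝ)⁻¹ * Real.log (Ymat (Matrix.of fun ℓ' _ => π ℓ') r (i+1) k0 k') := by
        rw [div_eq_inv_mul]
        have := mul_le_mul_of_nonneg_left hk' (le_of_lt (inv_pos.2 hpos'))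
        rw [mul_add] at this
        linarith [this]
      have h2 : ((i+1 : ℕ) : ℝ)⁻¹ *
          Real.log (Ymat (Matrix.of fun ℓ' _ => π ℓ') r (i+1) k0 k') ≤ γ +
          ∑ k : Fin K, |((i+1 : ℕ) : ℝ)⁻¹ *
            Real.log (Ymat (Matrix.of fun ℓ' _ => π ℓ') r (i+1) k0 k) - γ| := by
        have h3 : ((i+1 : ℕ) : ℝ)⁻¹ *
            Real.log (Ymat (Matrix.of fun ℓ' _ => π ℓ') r (i+1) k0 k') - γ ≤
            ∑ k : Fin K, |((i+1 : ℕ) : ℝ)⁻¹ *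
              Real.log (Ymat (Matrix.of fun ℓ' _ => π ℓ') r (i+1) k0 k) - γ| :=
          le_trans (le_abs_self _)
            (Finset.single_le_sum (f := fun k => |((i+1 : ℕ) : ℝ)⁻¹ * Real.log (Ymat (Matrix.of fun ℓ' _ => π ℓ') r (i+1) k0 k) - γ|) (fun k _ => abs_nonneg _) (Finset.mem_univ k'))
        linarith
      linarith
  -- SLLN limit of the same sequence
  have hTlim' : Tendsto (fun i : ℕ => T (i+1) / ((i+1 : ℕ) : ℝ)) atTop
      (nhds (∫ x, X 0 x)) := hωS.comp (tendsto_add_atTop_nat 1)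
  have := tendsto_nhds_unique hTlim hTlim'
  rw [this]
end

section
/- If A = π𝟙ᵀ is rank one with all entries of π strictly positive, then the performance gap equals the expectation of a Jensen's inequality gap: ρ^{GA} − ρ^{AA} = E[ log(Σ_k π_k r_k) − Σ_k π_k log r_k ], and this quantity is nonnegative. -/
open MeasureTheory ProbabilityTheory Filter Matrix Topology

lemma Ymat_entry {K : ℕ} (π : Fin K → ℝ) (r : ℕ → Fin K → ℝ) :
    ∀ i : ℕ, 1 ≤ i → ∀ ℓ k : Fin K,
    Ymat (Matrix.of fun ℓ' _ => π ℓ') r i ℓ k =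
      (∏ j ∈ Finset.range (i - 1), ∑ m, π m * r (j + 1) m) * (π k * r i k) := by
  intro i
  induction i with
  | zero => intro h; omega
  | succ n ih =>
    intro _ ℓ k
    rcases Nat.eq_zero_or_pos n with hn | hn
    · subst hn
      simp [Ymat, List.range_succ, Matrix.mul_diagonal, Matrix.transpose_apply]
    · have hY : Ymat (Matrix.of fun ℓ' _ => π ℓ') r (n + 1) =
          Ymat (Matrix.of fun ℓ' _ => π ℓ') r n *
            ((Matrix.of fun ℓ' _ => π ℓ')ᵀ * Matrix.diagonal (r (n + 1))) := by
        simp [Ymat, List.range_succ]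
      rw [hY, Matrix.mul_apply]
      have hterm : ∀ m, Ymat (Matrix.of fun ℓ' _ => π ℓ') r n ℓ m *
          ((Matrix.of fun ℓ' _ => π ℓ')ᵀ * Matrix.diagonal (r (n + 1))) m k =
          ((∏ j ∈ Finset.range (n - 1), ∑ m', π m' * r (j + 1) m') * (π m * r n m)) *
            (π k * r (n + 1) k) := by
        intro m
        rw [ih hn, Matrix.mul_diagonal, Matrix.transpose_apply]
        simp only [Matrix.of_apply]
        try ring
      rw [Finset.sum_congr rfl fun m _ => hterm m]
      rw [← Finset.sum_mul, ← Finset.mul_sum]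
      have hn1 : n - 1 + 1 = n := by omega
      rw [show n + 1 - 1 = n from rfl, ← hn1, Finset.prod_range_succ, hn1]
      try ring

lemma tendsto_shift_div (f : ℕ → ℝ) (L : ℝ)
    (h : Tendsto (fun n : ℕ => f n / n) atTop (𝓝 L)) :
    Tendsto (fun n : ℕ => f (n - 1) / n) atTop (𝓝 L) := by
  have h1 : Tendsto (fun n : ℕ => f (n - 1) / ((n - 1 : ℕ) : ℝ)) atTop (𝓝 L) :=
    h.comp (tendsto_sub_atTop_nat 1)
  have h2 : Tendsto (fun n : ℕ => (((n - 1 : ℕ) : ℝ)) / (n : ℝ)) atTop (𝓝 1) := by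
    have h3 : Tendsto (fun n : ℕ => 1 - (n : ℝ)⁻¹) atTop (𝓝 1) := by
      simpa using tendsto_const_nhds.sub (tendsto_inv_atTop_nhds_zero_nat (𝕜 := ℝ))
    apply h3.congr'
    filter_upwards [eventually_ge_atTop 1] with n hn
    have hn0 : (n : ℝ) ≠ 0 := by positivity
    rw [Nat.cast_sub hn, Nat.cast_one]
    field_simp
  have := h1.mul h2
  rw [mul_one] at this
  apply this.congr'
  filter_upwards [eventually_ge_atTop 2] with n hn
  have hn1 : ((n - 1 : ℕ) : ℝ) ≠ 0 := by
    have : 1 ≤ n - 1 := by omega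
    positivity
  show f (n - 1) / ((n - 1 : ℕ) : ℝ) * (((n - 1 : ℕ) : ℝ) / n) = f (n - 1) / n
  rw [div_mul_div_comm, mul_comm (f (n - 1)), mul_div_mul_left _ _ hn1]

lemma jensen_pointwise {K : ℕ} (π : Fin K → ℝ) (hπ_pos : ∀ k, 0 < π k)
    (hπ_sum : ∑ k, π k = 1) (r : Fin K → ℝ) (hr : ∀ k, 0 < r k) :
    ∑ k, π k * Real.log (r k) ≤ Real.log (∑ k, π k * r k) := by
  have := (strictConcaveOn_log_Ioi.concaveOn).le_map_sum (t := Finset.univ) (w := π) (p := r)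
    (fun i _ => (hπ_pos i).le) hπ_sum (fun i _ => hr i)
  simpa [smul_eq_mul] using this

/-- **Jensen-gap form of the performance gap under rank-one topologies.** If `A = π𝟙ᵀ` with
`π > 0`, then `ρ^GA − ρ^AA = E[log(Σ_k π_k r_k) − Σ_k π_k log r_k] ≥ 0`. -/
theorem jensen_gap_rank_one
    {K : ℕ} (hK : 0 < K)
    (π : Fin K → ℝ)
    (hπ_pos : ∀ k, 0 < π k)
    (hπ_sum : ∑ k, π k = 1)
    {Ω : Type} [MeasureSpace Ω] [IsProbabilityMeasure (ℙ : Measure Ω)]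
    (R : ℕ → Ω → Fin K → ℝ)
    (hmeas : ∀ i, Measurable (R i))
    (hindep : iIndepFun (fun i => R (i + 1)) ℙ)
    (hident : ∀ i : ℕ, IdentDistrib (R (i + 1)) (R 1) ℙ ℙ)
    (hpos : ∀ i k, 1 ≤ i → ∀ᵐ ω, 0 < R i ω k)
    (hmean : ∀ i k, 1 ≤ i → ∫ ω, R i ω k = 1)
    (hint : ∀ i k, 1 ≤ i → Integrable (fun ω => R i ω k))
    (hlog : ∀ i k, 1 ≤ i → Integrable (fun ω => Real.log (R i ω k)))
    (γ : ℝ)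
    (hγ : ∀ ℓ k : Fin K, ∀ᵐ ω, Tendsto
      (fun i : ℕ => (i : ℝ)⁻¹ *
        Real.log (Ymat (Matrix.of fun ℓ' _ => π ℓ') (fun j => R j ω) i ℓ k))
      atTop (nhds γ)) :
    (-∑ k, π k * ∫ ω, Real.log (R 1 ω k)) - (-γ) =
      ∫ ω, (Real.log (∑ k, π k * R 1 ω k) - ∑ k, π k * Real.log (R 1 ω k)) ∧
    0 ≤ ∫ ω, (Real.log (∑ k, π k * R 1 ω k) - ∑ k, π k * Real.log (R 1 ω k)) := by
  set k0 : Fin K := ⟨0, hK⟩ with hk0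
  -- the basic random sequences
  set X : ℕ → Ω → ℝ := fun j ω => Real.log (∑ k, π k * R (j + 1) ω k) with hX
  set Z : ℕ → Ω → ℝ := fun j ω => Real.log (R (j + 1) ω k0) with hZ
  set W : ℕ → Ω → ℝ := fun j ω => X j ω - Z j ω with hW
  -- measurability
  have hgX : Measurable fun x : Fin K → ℝ => Real.log (∑ k, π k * x k) := by
    apply Real.measurable_log.comp
    exact Finset.measurable_sum _ fun k _ => (measurable_pi_apply k).const_mul _
  have hgZ : Measurable fun x : Fin K → ℝ => Real.log (x k0) :=
    Real.measurable_log.comp (measurable_pi_apply k0)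
  have hgW : Measurable fun x : Fin K → ℝ => Real.log (∑ k, π k * x k) - Real.log (x k0) :=
    hgX.sub hgZ
  have hXmeas : ∀ j, Measurable (X j) := fun j => hgX.comp (hmeas (j + 1))
  have hZmeas : ∀ j, Measurable (Z j) := fun j => hgZ.comp (hmeas (j + 1))
  -- independence & identical distribution of the composed sequences
  have hindepW : iIndepFun W ℙ :=
    hindep.comp (fun _ => fun x : Fin K → ℝ =>
      Real.log (∑ k, π k * x k) - Real.log (x k0)) (fun _ => hgW)
  have hindepZ : iIndepFun Z ℙ :=
    hindep.comp (fun _ => fun x : Fin K → ℝ => Real.log (x k0)) (fun _ => hgZ)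
  have hidW : ∀ i, IdentDistrib (W i) (W 0) ℙ ℙ := fun i =>
    ((hident i).trans (hident 0).symm).comp hgW
  have hidZ : ∀ i, IdentDistrib (Z i) (Z 0) ℙ ℙ := fun i =>
    ((hident i).trans (hident 0).symm).comp hgZ
  -- a.e. positivity of everything in sight
  have hP : ∀ᵐ ω, ∀ i, ∀ k, 0 < R (i + 1) ω k := by
    rw [ae_all_iff]
    intro i
    rw [ae_all_iff]
    intro k
    exact hpos (i + 1) k (by omega)
  -- integrability of `X 0`
  have hSint : Integrable (fun ω => ∑ k, π k * R 1 ω k) :=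
    integrable_finset_sum _ fun k _ => (hint 1 k le_rfl).const_mul _
  have hZ0int : Integrable (Z 0) := hlog 1 k0 le_rfl
  have hlowint : Integrable (fun ω => Real.log (π k0) + Z 0 ω) :=
    (integrable_const _).add hZ0int
  have hX0int : Integrable (X 0) := by
    apply Integrable.mono (g := fun ω => |Real.log (π k0) + Z 0 ω| +
        |(∑ k, π k * R 1 ω k) - 1|)
      (hlowint.abs.add ((hSint.sub (integrable_const 1)).abs))
      (hXmeas 0).aestronglyMeasurable
    filter_upwards [hP] with ω hω
    have hpos1 : ∀ k, 0 < R 1 ω k := hω 0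
    have hSpos : 0 < ∑ k, π k * R 1 ω k :=
      Finset.sum_pos (fun k _ => mul_pos (hπ_pos k) (hpos1 k)) ⟨k0, Finset.mem_univ k0⟩
    have hle : π k0 * R 1 ω k0 ≤ ∑ k, π k * R 1 ω k :=
      Finset.single_le_sum (fun k _ => (mul_pos (hπ_pos k) (hpos1 k)).le) (Finset.mem_univ k0)
    have hlow : Real.log (π k0) + Z 0 ω ≤ X 0 ω := by
      have : Real.log (π k0 * R 1 ω k0) ≤ X 0 ω :=
        Real.log_le_log (mul_pos (hπ_pos k0) (hpos1 k0)) hle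
      rwa [Real.log_mul (hπ_pos k0).ne' (hpos1 k0).ne'] at this
    have hup : X 0 ω ≤ (∑ k, π k * R 1 ω k) - 1 := Real.log_le_sub_one_of_pos hSpos
    rw [Real.norm_eq_abs, Real.norm_eq_abs]
    rw [abs_of_nonneg (by positivity : (0:ℝ) ≤ |Real.log (π k0) + Z 0 ω| +
      |(∑ k, π k * R 1 ω k) - 1|)]
    rcases le_or_gt 0 (X 0 ω) with h0 | h0
    · rw [abs_of_nonneg h0]
      calc X 0 ω ≤ (∑ k, π k * R 1 ω k) - 1 := hup
        _ ≤ |(∑ k, π k * R 1 ω k) - 1| := le_abs_self _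
        _ ≤ _ := le_add_of_nonneg_left (abs_nonneg _)
    · rw [abs_of_neg h0]
      calc -X 0 ω ≤ -(Real.log (π k0) + Z 0 ω) := by linarith
        _ ≤ |Real.log (π k0) + Z 0 ω| := neg_le_abs _
        _ ≤ _ := le_add_of_nonneg_right (abs_nonneg _)
  have hW0int : Integrable (W 0) := hX0int.sub hZ0int
  -- the strong law applied to `W` and `Z`
  have hA := strong_law_ae_real W hW0int (fun i j hij => hindepW.indepFun hij) hidW
  have hB := strong_law_ae_real Z hZ0int (fun i j hij => hindepZ.indepFun hij) hidZ
  -- identify γ with ∫ X 0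
  have hγL : γ = ∫ ω, X 0 ω := by
    obtain ⟨ω, hωA, hωB, hωC, hωP⟩ := (hA.and (hB.and ((hγ k0 k0).and hP))).exists
    -- the synthetic limit
    have T1 : Tendsto (fun n : ℕ => (∑ j ∈ Finset.range (n - 1), W j ω) / n) atTop
        (𝓝 (∫ ω', W 0 ω')) := tendsto_shift_div (fun n => ∑ j ∈ Finset.range n, W j ω) _ hωA
    have T3 : Tendsto (fun n : ℕ => Real.log (π k0) / n) atTop (𝓝 0) :=
      tendsto_const_div_atTop_nhds_zero_nat _
    have Tsum := (T3.add (T1.add hωB))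
    have hWint : ∫ ω', W 0 ω' = (∫ ω', X 0 ω') - ∫ ω', Z 0 ω' := integral_sub hX0int hZ0int
    rw [hWint] at Tsum
    have hlim : (0 : ℝ) + ((∫ ω', X 0 ω') - (∫ ω', Z 0 ω') + ∫ ω', Z 0 ω') = ∫ ω', X 0 ω' := by
      ring
    rw [hlim] at Tsum
    -- the synthetic sequence agrees with the matrix entries eventually
    have heq : ∀ᶠ n : ℕ in atTop,
        Real.log (π k0) / n + ((∑ j ∈ Finset.range (n - 1), W j ω) / n +
          (∑ j ∈ Finset.range n, Z j ω) / n) =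
        (n : ℝ)⁻¹ * Real.log (Ymat (Matrix.of fun ℓ' _ => π ℓ') (fun j => R j ω) n k0 k0) := by
      filter_upwards [eventually_ge_atTop 1] with n hn
      have hentry := Ymat_entry π (fun j => R j ω) n hn k0 k0
      have hSpos : ∀ j, 0 < ∑ m, π m * R (j + 1) ω m := fun j =>
        Finset.sum_pos (fun m _ => mul_pos (hπ_pos m) (hωP j m)) ⟨k0, Finset.mem_univ k0⟩
      have hprodpos : 0 < ∏ j ∈ Finset.range (n - 1), ∑ m, π m * R (j + 1) ω m :=
        Finset.prod_pos fun j _ => hSpos j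
      have hRn : 0 < R n ω k0 := by
        have := hωP (n - 1) k0
        rwa [Nat.sub_add_cancel hn] at this
      have hlogY : Real.log (Ymat (Matrix.of fun ℓ' _ => π ℓ') (fun j => R j ω) n k0 k0) =
          (∑ j ∈ Finset.range (n - 1), X j ω) + (Real.log (π k0) + Real.log (R n ω k0)) := by
        rw [hentry, Real.log_mul hprodpos.ne' (mul_pos (hπ_pos k0) hRn).ne',
          Real.log_mul (hπ_pos k0).ne' hRn.ne',
          Real.log_prod (fun j _ => (hSpos j).ne')]
      have hXWZ : (∑ j ∈ Finset.range (n - 1), X j ω) =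
          (∑ j ∈ Finset.range (n - 1), W j ω) + ∑ j ∈ Finset.range (n - 1), Z j ω := by
        rw [← Finset.sum_add_distrib]
        exact Finset.sum_congr rfl fun j _ => by simp [hW]
      have hZn : Real.log (R n ω k0) = Z (n - 1) ω := by
        simp only [hZ, Nat.sub_add_cancel hn]
      have hZsum : (∑ j ∈ Finset.range (n - 1), Z j ω) + Z (n - 1) ω =
          ∑ j ∈ Finset.range n, Z j ω := by
        conv_rhs => rw [← Nat.sub_add_cancel hn, Finset.sum_range_succ]
      rw [hlogY, hXWZ, hZn, inv_mul_eq_div]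
      rw [show (∑ j ∈ Finset.range (n - 1), W j ω) + (∑ j ∈ Finset.range (n - 1), Z j ω) +
          (Real.log (π k0) + Z (n - 1) ω) =
          Real.log (π k0) + ((∑ j ∈ Finset.range (n - 1), W j ω) +
            ((∑ j ∈ Finset.range (n - 1), Z j ω) + Z (n - 1) ω)) by ring, hZsum]
      rw [add_div, add_div]
    exact tendsto_nhds_unique hωC (Tsum.congr' heq)
  -- finishing: rewrite the goal using γ = ∫ X 0
  have hsumint : Integrable (fun ω => ∑ k, π k * Real.log (R 1 ω k)) :=
    integrable_finset_sum _ fun k _ => (hlog 1 k le_rfl).const_mul _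
  have hsplit : ∫ ω, (Real.log (∑ k, π k * R 1 ω k) - ∑ k, π k * Real.log (R 1 ω k)) =
      (∫ ω, X 0 ω) - ∑ k, π k * ∫ ω, Real.log (R 1 ω k) := by
    rw [integral_sub hX0int hsumint, integral_finset_sum _ fun k _ =>
      (hlog 1 k le_rfl).const_mul _]
    congr 1
    exact Finset.sum_congr rfl fun k _ => integral_const_mul _ _
  constructor
  · rw [hsplit, hγL]
    ring
  · apply integral_nonneg_of_ae
    filter_upwards [hP] with ω hω
    have := jensen_pointwise π hπ_pos hπ_sum (R 1 ω) (hω 0)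
    simp only [Pi.zero_apply]
    linarith
end

section
/- Suppose (r_1,…,r_K) are exchangeable, strictly positive random variables with E[r_k] = 1 and E[|log r_k|] < ∞, and let π = (1/K)𝟙 be the uniform probability vector. If a probability vector v with strictly positive entries satisfies the stationarity conditions π_k / v_k = E[ r_k / (Σ_ℓ r_ℓ v_ℓ) ] for all k, then v = (1/K)𝟙; i.e., the uniform vector is the unique solution of the KKT conditions for minimizing F. -/
open MeasureTheory ProbabilityTheory

private lemma integrable_of_bound {Ω : Type} [MeasureSpace Ω]
    [IsProbabilityMeasure (ℙ : Measure Ω)] {f : Ω → ℝ} (C : ℝ)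
    (hm : Measurable f) (h : ∀ᵐ ω, |f ω| ≤ C) : Integrable f :=
  Integrable.mono' (integrable_const C) hm.aestronglyMeasurable (by simpa using h)

private lemma pair_key {bk bl vk vl xk xl : ℝ} (hk : vk ≠ 0) (hl : vl ≠ 0) :
    (bk^2/vk) * xk * (xl * vl) - bk * xk * (bl * xl)
      + ((bl^2/vl) * xl * (xk * vk) - bl * xl * (bk * xk))
    = xk * xl * (bk * vl - bl * vk)^2 / (2*(vk*vl))
      + xl * xk * (bl * vk - bk * vl)^2 / (2*(vl*vk)) := by
  field_simp
  ring

private lemma lagrange_aux {K : ℕ} (v bb x : Fin K → ℝ) (hv : ∀ k, v k ≠ 0) :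
    (∑ k, ((bb k)^2 / v k) * x k) * (∑ k, x k * v k) - (∑ k, bb k * x k)^2
      = ∑ k, ∑ l, x k * x l * (bb k * v l - bb l * v k)^2 / (2 * (v k * v l)) := by
  have expand :
      (∑ k, ((bb k)^2 / v k) * x k) * (∑ k, x k * v k) - (∑ k, bb k * x k)^2
        = ∑ k, ∑ l, (((bb k)^2 / v k) * x k * (x l * v l) - bb k * x k * (bb l * x l)) := by
    rw [pow_two, Finset.sum_mul_sum, Finset.sum_mul_sum, ← Finset.sum_sub_distrib]
    exact Finset.sum_congr rfl fun k _ => by rw [← Finset.sum_sub_distrib]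
  rw [expand]
  have e1 : ∑ k, ∑ l,
      ((((bb k)^2 / v k) * x k * (x l * v l) - bb k * x k * (bb l * x l))
        + (((bb l)^2 / v l) * x l * (x k * v k) - bb l * x l * (bb k * x k)))
      = ∑ k, ∑ l,
      (x k * x l * (bb k * v l - bb l * v k)^2 / (2 * (v k * v l))
        + x l * x k * (bb l * v k - bb k * v l)^2 / (2 * (v l * v k))) :=
    Finset.sum_congr rfl fun k _ => Finset.sum_congr rfl fun l _ => pair_key (hv k) (hv l)
  have e2 : ∑ k, ∑ l,
      ((((bb k)^2 / v k) * x k * (x l * v l) - bb k * x k * (bb l * x l))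
        + (((bb l)^2 / v l) * x l * (x k * v k) - bb l * x l * (bb k * x k)))
      = (∑ k, ∑ l, (((bb k)^2 / v k) * x k * (x l * v l) - bb k * x k * (bb l * x l)))
        + ∑ k, ∑ l, (((bb l)^2 / v l) * x l * (x k * v k) - bb l * x l * (bb k * x k)) := by
    simp [Finset.sum_add_distrib]
  have e3 : ∑ k, ∑ l,
      (x k * x l * (bb k * v l - bb l * v k)^2 / (2 * (v k * v l))
        + x l * x k * (bb l * v k - bb k * v l)^2 / (2 * (v l * v k)))
      = (∑ k, ∑ l, x k * x l * (bb k * v l - bb l * v k)^2 / (2 * (v k * v l)))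
        + ∑ k, ∑ l, x l * x k * (bb l * v k - bb k * v l)^2 / (2 * (v l * v k)) := by
    simp [Finset.sum_add_distrib]
  have c1 : ∑ k, ∑ l, (((bb l)^2 / v l) * x l * (x k * v k) - bb l * x l * (bb k * x k))
      = ∑ k, ∑ l, (((bb k)^2 / v k) * x k * (x l * v l) - bb k * x k * (bb l * x l)) :=
    Finset.sum_comm
  have c2 : ∑ k, ∑ l, x l * x k * (bb l * v k - bb k * v l)^2 / (2 * (v l * v k))
      = ∑ k, ∑ l, x k * x l * (bb k * v l - bb l * v k)^2 / (2 * (v k * v l)) :=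
    Finset.sum_comm
  rw [e2, e3, c1, c2] at e1
  linarith

/-- **Uniform vector is the unique KKT point under exchangeability.** If `(r_1,…,r_K)` are
exchangeable strictly positive random variables with mean one and integrable logarithms, and a
strictly positive probability vector `v` satisfies the stationarity conditions
`π_k / v_k = E[r_k / (Σ_ℓ r_ℓ v_ℓ)]` for all `k` (with `π = (1/K)𝟙`), then `v = (1/K)𝟙`. -/
theorem uniform_unique_KKT_point
    {K : ℕ} (hK : 0 < K)
    {Ω : Type} [MeasureSpace Ω] [IsProbabilityMeasure (ℙ : Measure Ω)]
    (r : Ω → Fin K → ℝ)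
    (hmeas : Measurable r)
    (hpos : ∀ k, ∀ᵐ ω, 0 < r ω k)
    (hmean : ∀ k, ∫ ω, r ω k = 1)
    (hint : ∀ k, Integrable (fun ω => r ω k))
    (hlog : ∀ k, Integrable (fun ω => Real.log (r ω k)))
    (hexch : ∀ σ : Equiv.Perm (Fin K), IdentDistrib (fun ω k => r ω (σ k)) r ℙ ℙ)
    (v : Fin K → ℝ)
    (hv_pos : ∀ k, 0 < v k)
    (hv_sum : ∑ k, v k = 1)
    (hKKT : ∀ k, (1 / K : ℝ) / v k = ∫ ω, r ω k / ∑ ℓ, r ω ℓ * v ℓ) :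
    v = fun _ => (1 / K : ℝ) := by
  have hK0 : (0:ℝ) < (K:ℝ) := by exact_mod_cast hK
  have hrm : ∀ k : Fin K, Measurable (fun ω => r ω k) :=
    fun k => (measurable_pi_apply k).comp hmeas
  have hRm : Measurable (fun ω => ∑ ℓ, r ω ℓ) :=
    Finset.measurable_sum _ fun l _ => hrm l
  have hSm : Measurable (fun ω => ∑ ℓ, r ω ℓ * v ℓ) :=
    Finset.measurable_sum _ fun l _ => (hrm l).mul_const _
  have hpos_ae : ∀ᵐ ω, ∀ k, 0 < r ω k := ae_all_iff.2 hpos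
  have hne : (Finset.univ : Finset (Fin K)).Nonempty := ⟨⟨0, hK⟩, Finset.mem_univ _⟩
  have hRpos : ∀ ω, (∀ k, 0 < r ω k) → 0 < ∑ ℓ, r ω ℓ :=
    fun ω h => Finset.sum_pos (fun l _ => h l) hne
  have hSpos : ∀ ω, (∀ k, 0 < r ω k) → 0 < ∑ ℓ, r ω ℓ * v ℓ :=
    fun ω h => Finset.sum_pos (fun l _ => mul_pos (h l) (hv_pos l)) hne
  have hA_int : ∀ k : Fin K, Integrable (fun ω => r ω k / ∑ ℓ, r ω ℓ) := by
    intro k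
    refine integrable_of_bound 1 ((hrm k).div hRm) ?_
    filter_upwards [hpos_ae] with ω hω
    have hR := hRpos ω hω
    rw [abs_of_nonneg (div_nonneg (hω k).le hR.le)]
    exact (div_le_one hR).2 (Finset.single_le_sum (fun l _ => (hω l).le) (Finset.mem_univ k))
  have hB_int : ∀ k : Fin K, Integrable (fun ω => r ω k / ∑ ℓ, r ω ℓ * v ℓ) := by
    intro k
    refine integrable_of_bound (1 / v k) ((hrm k).div hSm) ?_
    filter_upwards [hpos_ae] with ω hω
    have hS := hSpos ω hω
    rw [abs_of_nonneg (div_nonneg (hω k).le hS.le)]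
    rw [div_le_div_iff₀ hS (hv_pos k), one_mul]
    exact Finset.single_le_sum (f := fun l => r ω l * v l)
      (fun l _ => (mul_pos (hω l) (hv_pos l)).le) (Finset.mem_univ k)
  have hA_eq : ∀ j k : Fin K, (∫ ω, r ω k / ∑ ℓ, r ω ℓ) = ∫ ω, r ω j / ∑ ℓ, r ω ℓ := by
    intro j k
    have hφ : Measurable (fun x : Fin K → ℝ => x j / ∑ ℓ, x ℓ) :=
      (measurable_pi_apply j).div (Finset.measurable_sum _ fun l _ => measurable_pi_apply l)
    have h2 := ((hexch (Equiv.swap j k)).comp hφ).integral_eq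
    have h3 : ((fun x : Fin K → ℝ => x j / ∑ ℓ, x ℓ) ∘ (fun ω m => r ω ((Equiv.swap j k) m)))
        = fun ω => r ω k / ∑ ℓ, r ω ℓ := by
      funext ω
      have hs : ∑ ℓ, r ω ((Equiv.swap j k) ℓ) = ∑ ℓ, r ω ℓ := Equiv.sum_comp _ (r ω)
      simp only [Function.comp_apply, Equiv.swap_apply_left, hs]
    have h4 : ((fun x : Fin K → ℝ => x j / ∑ ℓ, x ℓ) ∘ r) = fun ω => r ω j / ∑ ℓ, r ω ℓ := rfl
    rw [h3, h4] at h2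
    exact h2
  have hA_val : ∀ k : Fin K, (∫ ω, r ω k / ∑ ℓ, r ω ℓ) = 1 / K := by
    have hsum : ∑ j, (∫ ω, r ω j / ∑ ℓ, r ω ℓ) = 1 := by
      rw [← integral_finset_sum _ (fun j _ => hA_int j)]
      have hone : (fun ω => ∑ j, r ω j / ∑ ℓ, r ω ℓ) =ᵐ[ℙ] fun _ => (1:ℝ) := by
        filter_upwards [hpos_ae] with ω hω
        rw [← Finset.sum_div, div_self (hRpos ω hω).ne']
      rw [integral_congr_ae hone]
      simp
    intro k
    have hconst : ∑ j, (∫ ω, r ω j / ∑ ℓ, r ω ℓ)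
        = (K : ℝ) * ∫ ω, r ω k / ∑ ℓ, r ω ℓ := by
      rw [Finset.sum_congr rfl fun j _ => (hA_eq j k).symm]
      simp [Finset.sum_const, mul_comm]
    rw [hconst] at hsum
    field_simp
    linarith
  -- the two functions
  set g' : Ω → ℝ := fun ω => ∑ k,
      ((((K:ℝ) * v k - 1)^2 / v k - (K:ℝ)^2 * v k) * (r ω k / ∑ ℓ, r ω ℓ)
        + 2 - r ω k / ∑ ℓ, r ω ℓ * v ℓ) with hg'def
  set g : Ω → ℝ := fun ω =>
      (∑ k, (((K:ℝ) * v k - 1)^2 / v k) * r ω k) / (∑ ℓ, r ω ℓ)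
        - ((K:ℝ) * (∑ ℓ, r ω ℓ * v ℓ) - ∑ ℓ, r ω ℓ)^2
            / ((∑ ℓ, r ω ℓ * v ℓ) * ∑ ℓ, r ω ℓ) with hgdef
  have hsummand_int : ∀ k : Fin K, Integrable (fun ω =>
      (((K:ℝ) * v k - 1)^2 / v k - (K:ℝ)^2 * v k) * (r ω k / ∑ ℓ, r ω ℓ)
        + 2 - r ω k / ∑ ℓ, r ω ℓ * v ℓ) :=
    fun k => (((hA_int k).const_mul _).add (integrable_const 2)).sub (hB_int k)
  have hg'_int : Integrable g' := by
    rw [hg'def]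
    exact integrable_finset_sum _ fun k _ => hsummand_int k
  have hg'_val : ∫ ω, g' ω = 0 := by
    rw [hg'def]
    rw [integral_finset_sum _ (fun k _ => hsummand_int k)]
    have hterm : ∀ k : Fin K, (∫ ω,
        ((((K:ℝ) * v k - 1)^2 / v k - (K:ℝ)^2 * v k) * (r ω k / ∑ ℓ, r ω ℓ)
          + 2 - r ω k / ∑ ℓ, r ω ℓ * v ℓ)) = 0 := by
      intro k
      have h2 : Integrable (fun ω =>
          (((K:ℝ) * v k - 1)^2 / v k - (K:ℝ)^2 * v k) * (r ω k / ∑ ℓ, r ω ℓ)) :=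
        (hA_int k).const_mul _
      have h1 : Integrable (fun ω =>
          (((K:ℝ) * v k - 1)^2 / v k - (K:ℝ)^2 * v k) * (r ω k / ∑ ℓ, r ω ℓ) + 2) :=
        h2.add (integrable_const 2)
      rw [integral_sub h1 (hB_int k), integral_add h2 (integrable_const 2),
        integral_const_mul, integral_const, hA_val k, ← hKKT k]
      have hvk := (hv_pos k).ne'
      have hKne : (K:ℝ) ≠ 0 := hK0.ne'
      simp only [measure_univ, probReal_univ, ENNReal.toReal_one, smul_eq_mul, one_mul]
      field_simp
      ring
    rw [Finset.sum_congr rfl fun k _ => hterm k]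
    simp
  -- g' equals g a.e.
  have hgg' : g' =ᵐ[ℙ] g := by
    filter_upwards [hpos_ae] with ω hω
    have hR := hRpos ω hω
    have hS := hSpos ω hω
    rw [hg'def, hgdef]
    beta_reduce
    rw [Finset.sum_sub_distrib, Finset.sum_add_distrib, Finset.sum_const, Finset.card_univ,
      Fintype.card_fin, ← Finset.sum_div]
    have e0 : ∀ k ∈ (Finset.univ : Finset (Fin K)),
        (((K:ℝ) * v k - 1)^2 / v k - (K:ℝ)^2 * v k) * (r ω k / ∑ ℓ, r ω ℓ)
          = ((((K:ℝ) * v k - 1)^2 / v k) * r ω k - (K:ℝ)^2 * (r ω k * v k)) / ∑ ℓ, r ω ℓ := by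
      intro k _
      ring
    rw [Finset.sum_congr rfl e0, ← Finset.sum_div, Finset.sum_sub_distrib, ← Finset.mul_sum]
    rw [nsmul_eq_mul]
    field_simp
    ring
  have hg_int : Integrable g := hg'_int.congr hgg'
  have hg_zero : ∫ ω, g ω = 0 := by
    rw [← integral_congr_ae hgg']
    exact hg'_val
  -- pointwise formula for g as a nonnegative quotient
  have key_pos : ∀ ω, (∀ k, 0 < r ω k) → g ω
      = (∑ k, ∑ l, r ω k * r ω l
            * (((K:ℝ) * v k - 1) * v l - ((K:ℝ) * v l - 1) * v k)^2 / (2 * (v k * v l)))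
        / ((∑ ℓ, r ω ℓ * v ℓ) * ∑ ℓ, r ω ℓ) := by
    intro ω hω
    have hR := (hRpos ω hω).ne'
    have hS := (hSpos ω hω).ne'
    have hlag := lagrange_aux v (fun k => (K:ℝ) * v k - 1) (r ω) (fun k => (hv_pos k).ne')
    have hbbS : ∑ k, ((K:ℝ) * v k - 1) * r ω k
        = (K:ℝ) * (∑ ℓ, r ω ℓ * v ℓ) - ∑ ℓ, r ω ℓ := by
      have e0 : ∀ k ∈ (Finset.univ : Finset (Fin K)),
          ((K:ℝ) * v k - 1) * r ω k = (K:ℝ) * (r ω k * v k) - r ω k := fun k _ => by ring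
      rw [Finset.sum_congr rfl e0, Finset.sum_sub_distrib, ← Finset.mul_sum]
    rw [hbbS] at hlag
    rw [hgdef]
    beta_reduce
    rw [← hlag]
    field_simp
  have hg_nonneg : 0 ≤ᵐ[ℙ] g := by
    filter_upwards [hpos_ae] with ω hω
    rw [key_pos ω hω]
    apply div_nonneg
    · refine Finset.sum_nonneg fun k _ => Finset.sum_nonneg fun l _ => div_nonneg ?_ ?_
      · exact mul_nonneg (mul_nonneg (hω k).le (hω l).le) (sq_nonneg _)
      · have := hv_pos k; have := hv_pos l; positivity
    · exact (mul_pos (hSpos ω hω) (hRpos ω hω)).le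
  have hg_ae0 : g =ᵐ[ℙ] 0 :=
    (integral_eq_zero_iff_of_nonneg_ae hg_nonneg hg_int).1 hg_zero
  -- pairwise proportionality
  have hprop : ∀ i j : Fin K, ((K:ℝ) * v i - 1) * v j = ((K:ℝ) * v j - 1) * v i := by
    intro i j
    by_contra hneq
    haveI : (MeasureTheory.ae (ℙ : Measure Ω)).NeBot :=
      ae_neBot.2 (IsProbabilityMeasure.ne_zero (μ := (ℙ : Measure Ω)))
    obtain ⟨ω, hgz, hω⟩ := (hg_ae0.and hpos_ae).exists
    have hgz' : g ω = 0 := hgz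
    have hSR := mul_pos (hSpos ω hω) (hRpos ω hω)
    have hQpos : 0 < r ω i * r ω j
        * (((K:ℝ) * v i - 1) * v j - ((K:ℝ) * v j - 1) * v i)^2 / (2 * (v i * v j)) := by
      apply div_pos
      · refine mul_pos (mul_pos (hω i) (hω j)) ?_
        have hne0 : (((K:ℝ) * v i - 1) * v j - ((K:ℝ) * v j - 1) * v i) ≠ 0 :=
          sub_ne_zero.mpr hneq
        exact lt_of_le_of_ne (sq_nonneg _) (Ne.symm (pow_ne_zero 2 hne0))
      · have := hv_pos i; have := hv_pos j; positivity
    have hQnn : ∀ k l : Fin K, 0 ≤ r ω k * r ω l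
        * (((K:ℝ) * v k - 1) * v l - ((K:ℝ) * v l - 1) * v k)^2 / (2 * (v k * v l)) := by
      intro k l
      apply div_nonneg (mul_nonneg (mul_nonneg (hω k).le (hω l).le) (sq_nonneg _))
      have := hv_pos k; have := hv_pos l; positivity
    have hsum_ge : r ω i * r ω j
        * (((K:ℝ) * v i - 1) * v j - ((K:ℝ) * v j - 1) * v i)^2 / (2 * (v i * v j))
        ≤ ∑ k, ∑ l, r ω k * r ω l
            * (((K:ℝ) * v k - 1) * v l - ((K:ℝ) * v l - 1) * v k)^2 / (2 * (v k * v l)) := by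
      calc r ω i * r ω j
            * (((K:ℝ) * v i - 1) * v j - ((K:ℝ) * v j - 1) * v i)^2 / (2 * (v i * v j))
          ≤ ∑ l, r ω i * r ω l
            * (((K:ℝ) * v i - 1) * v l - ((K:ℝ) * v l - 1) * v i)^2 / (2 * (v i * v l)) :=
            Finset.single_le_sum (fun l _ => hQnn i l) (Finset.mem_univ j)
        _ ≤ ∑ k, ∑ l, r ω k * r ω l
            * (((K:ℝ) * v k - 1) * v l - ((K:ℝ) * v l - 1) * v k)^2 / (2 * (v k * v l)) :=
            Finset.single_le_sum (fun k _ => Finset.sum_nonneg fun l _ => hQnn k l)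
              (Finset.mem_univ i)
    have hgpos : 0 < g ω := by
      rw [key_pos ω hω]
      exact div_pos (lt_of_lt_of_le hQpos hsum_ge) hSR
    rw [hgz'] at hgpos
    exact lt_irrefl 0 hgpos
  -- conclude
  funext k
  have h2 : ∑ j, ((K:ℝ) * v j - 1) = 0 := by
    rw [Finset.sum_sub_distrib, ← Finset.mul_sum, hv_sum]
    simp
  have h1 : ((K:ℝ) * v k - 1) * (∑ j, v j) = (∑ j, ((K:ℝ) * v j - 1)) * v k := by
    rw [Finset.mul_sum, Finset.sum_mul]
    exact Finset.sum_congr rfl fun j _ => hprop k j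
  rw [hv_sum, h2, mul_one, zero_mul] at h1
  have hKne : (K:ℝ) ≠ 0 := hK0.ne'
  field_simp
  linarith
end
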